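/- arXiv:2502.08746 — 2 statements merged into one kernel-verified Lean document; each statement's English description precedes it below -/
import Mathlib

section
/- The class of level-1 explainable graphs is closed under disjoint union and join: if G₁ and G₂ are vertex-disjoint level-1 explainable graphs, then both G₁ ∪ G₂ (disjoint union) and G₁ ∨ G₂ (join, adding all edges between V(G₁) and V(G₂)) are level-1 explainable. -/
/-- A DAG on leaf set `α` with vertex type `V`: an acyclic directed graph whose
set of leaves (vertices of out-degree 0) is identified with `α`. -/
structure DAGOn (α V : Type) where
  /-- `E u v` : there is a directed edge from `u` to `v`. -/
  E : V → V → Prop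
  /-- no directed cycles -/
  acyclic : ∀ v : V, ¬ Relation.TransGen E v v
  /-- identification of `α` with the leaves of the DAG -/
  leaf : α → V
  leaf_inj : Function.Injective leaf
  /-- the leaves (vertices without out-neighbours) are exactly the image of `leaf` -/
  isLeaf_iff : ∀ v : V, (∀ w, ¬ E v w) ↔ ∃ x, leaf x = v

namespace DAGOn

variable {α V : Type} (N : DAGOn α V)

/-- `N.below v u` : `u ⪯ v`, i.e. there is a directed path from `v` to `u`. -/
def below (v u : V) : Prop := Relation.ReflTransGen N.E v u

/-- The cluster of `v`: the set of leaves below `v`. -/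
def cluster (v : V) : Set α := {x | N.below v (N.leaf x)}

/-- `v` is a common ancestor of the leaf set `A`. -/
def IsCommonAnc (v : V) (A : Set α) : Prop := ∀ x ∈ A, N.below v (N.leaf x)

/-- `v` is a least common ancestor of `A`: a `⪯`-minimal common ancestor of `A`. -/
def IsLCA (v : V) (A : Set α) : Prop :=
  N.IsCommonAnc v A ∧ ∀ u : V, N.IsCommonAnc u A → N.below v u → u = v

/-- A network: a DAG with a unique root (vertex of in-degree 0). -/
def IsNetwork : Prop := ∃! r : V, ∀ w, ¬ N.E w r

/-- The 2-lca property: any two leaves have a unique least common ancestor. -/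
def Has2LCA : Prop := ∀ x y : α, ∃! v : V, N.IsLCA v {x, y}

/-- A hybrid vertex: in-degree at least 2. -/
def IsHybrid (v : V) : Prop := ∃ u w : V, u ≠ w ∧ N.E u v ∧ N.E w v

/-- The set `S` is connected in the underlying undirected graph of `N`. -/
def ConnOn (S : Set V) : Prop :=
  ∀ u ∈ S, ∀ v ∈ S,
    Relation.ReflTransGen (fun a b => a ∈ S ∧ b ∈ S ∧ (N.E a b ∨ N.E b a)) u v

/-- The set `S` is biconnected: connected and without cut vertices. -/
def BiconnOn (S : Set V) : Prop := N.ConnOn S ∧ ∀ v ∈ S, N.ConnOn (S \ {v})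

/-- A block: a maximal biconnected set of vertices. -/
def IsBlock (B : Set V) : Prop :=
  N.BiconnOn B ∧ ∀ B' : Set V, N.BiconnOn B' → B ⊆ B' → B' = B

/-- `v` is a `⪯`-maximal element of `B`. -/
def MaxIn (B : Set V) (v : V) : Prop := v ∈ B ∧ ∀ u ∈ B, N.below u v → u = v

/-- `N` is a level-`k` network: every block contains at most `k` hybrid vertices
other than its `⪯`-maximal vertices. -/
def IsLevel (k : ℕ) : Prop :=
  ∀ B : Set V, N.IsBlock B →
    {v | v ∈ B ∧ N.IsHybrid v ∧ ¬ N.MaxIn B v}.ncard ≤ k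

/-- The 0/1-labeled DAG `(N,t)` explains `G`: `N` has the 2-lca property and the
edges of `G` are exactly the leaf pairs whose (unique) lca is labeled `1`. -/
def Explains (t : V → Bool) (G : SimpleGraph α) : Prop :=
  N.Has2LCA ∧ ∀ x y : α, x ≠ y →
    (G.Adj x y ↔ ∃ v : V, N.IsLCA v {x, y} ∧ t v = true)

end DAGOn

/-- `G` can be explained by a 0/1-labeled level-`k` network. -/
def LevelKExplainable {α : Type} (G : SimpleGraph α) (k : ℕ) : Prop :=
  ∃ (V : Type) (_ : Finite V) (N : DAGOn α V) (t : V → Bool),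
    N.IsNetwork ∧ N.IsLevel k ∧ N.Explains t G

/-- `G` can be explained by a 0/1-labeled level-1 network. -/
def Level1Explainable {α : Type} (G : SimpleGraph α) : Prop :=
  LevelKExplainable G 1

/-- Disjoint union of two graphs, on the sum of their vertex types. -/
def disjUnionGraph {α β : Type} (G₁ : SimpleGraph α) (G₂ : SimpleGraph β) :
    SimpleGraph (α ⊕ β) :=
  SimpleGraph.fromRel (fun x y =>
    (∃ a b, x = Sum.inl a ∧ y = Sum.inl b ∧ G₁.Adj a b) ∨
    (∃ a b, x = Sum.inr a ∧ y = Sum.inr b ∧ G₂.Adj a b))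

/-- Join of two graphs: their disjoint union plus all edges between the parts. -/
def joinGraph {α β : Type} (G₁ : SimpleGraph α) (G₂ : SimpleGraph β) :
    SimpleGraph (α ⊕ β) :=
  SimpleGraph.fromRel (fun x y =>
    (∃ a b, x = Sum.inl a ∧ y = Sum.inl b ∧ G₁.Adj a b) ∨
    (∃ a b, x = Sum.inr a ∧ y = Sum.inr b ∧ G₂.Adj a b) ∨
    (∃ a b, x = Sum.inl a ∧ y = Sum.inr b))

set_option linter.unusedSectionVars false

section GlueAux

open Relation

variable {α β V₁ V₂ : Type}

/-- Edges of the glued network: a new root `none` above the two old roots. -/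
inductive GE (E₁ : V₁ → V₁ → Prop) (E₂ : V₂ → V₂ → Prop) (r₁ : V₁) (r₂ : V₂) :
    Option (V₁ ⊕ V₂) → Option (V₁ ⊕ V₂) → Prop
  | root₁ : GE E₁ E₂ r₁ r₂ none (some (Sum.inl r₁))
  | root₂ : GE E₁ E₂ r₁ r₂ none (some (Sum.inr r₂))
  | left {u v : V₁} : E₁ u v → GE E₁ E₂ r₁ r₂ (some (Sum.inl u)) (some (Sum.inl v))
  | right {u v : V₂} : E₂ u v → GE E₁ E₂ r₁ r₂ (some (Sum.inr u)) (some (Sum.inr v))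

variable {E₁ : V₁ → V₁ → Prop} {E₂ : V₂ → V₂ → Prop} {r₁ : V₁} {r₂ : V₂}

lemma GE.not_to_none {a} (h : GE E₁ E₂ r₁ r₂ a none) : False := nomatch h

lemma GE_inl_out {u b} (h : GE E₁ E₂ r₁ r₂ (some (Sum.inl u)) b) :
    ∃ v, b = some (Sum.inl v) ∧ E₁ u v := by
  cases h with
  | left h => exact ⟨_, rfl, h⟩

lemma GE_inr_out {u b} (h : GE E₁ E₂ r₁ r₂ (some (Sum.inr u)) b) :
    ∃ v, b = some (Sum.inr v) ∧ E₂ u v := by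
  cases h with
  | right h => exact ⟨_, rfl, h⟩

lemma reach_inl {u b} (h : ReflTransGen (GE E₁ E₂ r₁ r₂) (some (Sum.inl u)) b) :
    ∃ v, b = some (Sum.inl v) ∧ ReflTransGen E₁ u v := by
  induction h with
  | refl => exact ⟨u, rfl, .refl⟩
  | tail _ hstep ih =>
    obtain ⟨v, rfl, hv⟩ := ih
    obtain ⟨w, rfl, hw⟩ := GE_inl_out hstep
    exact ⟨w, rfl, hv.tail hw⟩

lemma reach_inr {u b} (h : ReflTransGen (GE E₁ E₂ r₁ r₂) (some (Sum.inr u)) b) :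
    ∃ v, b = some (Sum.inr v) ∧ ReflTransGen E₂ u v := by
  induction h with
  | refl => exact ⟨u, rfl, .refl⟩
  | tail _ hstep ih =>
    obtain ⟨v, rfl, hv⟩ := ih
    obtain ⟨w, rfl, hw⟩ := GE_inr_out hstep
    exact ⟨w, rfl, hv.tail hw⟩

lemma glue_acyclic (h₁ : ∀ v, ¬ TransGen E₁ v v) (h₂ : ∀ v, ¬ TransGen E₂ v v) :
    ∀ v, ¬ TransGen (GE E₁ E₂ r₁ r₂) v v := by
  rintro (_ | (u | u)) hv
  · cases hv with
    | single h => exact h.not_to_none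
    | tail _ h => exact h.not_to_none
  · obtain ⟨c, hc, hcr⟩ := (Relation.TransGen.head'_iff).mp hv
    obtain ⟨w, rfl, hw⟩ := GE_inl_out hc
    obtain ⟨v', hv', hreach⟩ := reach_inl hcr
    have huv : v' = u := by simpa using hv'.symm
    rw [huv] at hreach
    exact h₁ u (Relation.TransGen.head' hw hreach)
  · obtain ⟨c, hc, hcr⟩ := (Relation.TransGen.head'_iff).mp hv
    obtain ⟨w, rfl, hw⟩ := GE_inr_out hc
    obtain ⟨v', hv', hreach⟩ := reach_inr hcr
    have huv : v' = u := by simpa using hv'.symm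
    rw [huv] at hreach
    exact h₂ u (Relation.TransGen.head' hw hreach)


/-- The leaf map of the glued network. -/
def glueLeaf (N₁ : DAGOn α V₁) (N₂ : DAGOn β V₂) : α ⊕ β → Option (V₁ ⊕ V₂)
  | Sum.inl a => some (Sum.inl (N₁.leaf a))
  | Sum.inr b => some (Sum.inr (N₂.leaf b))

/-- The glued network. -/
def glue (N₁ : DAGOn α V₁) (N₂ : DAGOn β V₂) (r₁ : V₁) (r₂ : V₂) :
    DAGOn (α ⊕ β) (Option (V₁ ⊕ V₂)) where
  E := GE N₁.E N₂.E r₁ r₂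
  acyclic := glue_acyclic N₁.acyclic N₂.acyclic
  leaf := glueLeaf N₁ N₂
  leaf_inj := by
    rintro (a | a) (b | b) h
    · exact congrArg Sum.inl (N₁.leaf_inj (by simpa [glueLeaf] using h))
    · exact absurd h (by simp [glueLeaf])
    · exact absurd h (by simp [glueLeaf])
    · exact congrArg Sum.inr (N₂.leaf_inj (by simpa [glueLeaf] using h))
  isLeaf_iff := by
    rintro (_ | (u | u))
    · constructor
      · intro h; exact absurd GE.root₁ (h _)
      · rintro ⟨(a | b), h⟩ <;> simp [glueLeaf] at h
    · constructor
      · intro h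
        have hl : ∀ w, ¬ N₁.E u w := fun w hw => h _ (GE.left hw)
        obtain ⟨a, ha⟩ := (N₁.isLeaf_iff u).mp hl
        exact ⟨Sum.inl a, by simp [glueLeaf, ha]⟩
      · rintro ⟨x, hx⟩ w hw
        obtain ⟨v, rfl, hv⟩ := GE_inl_out hw
        match x, hx with
        | Sum.inl a, hx =>
          have ha : N₁.leaf a = u := by simpa [glueLeaf] using hx
          exact ((N₁.isLeaf_iff u).mpr ⟨a, ha⟩) v hv
    · constructor
      · intro h
        have hl : ∀ w, ¬ N₂.E u w := fun w hw => h _ (GE.right hw)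
        obtain ⟨a, ha⟩ := (N₂.isLeaf_iff u).mp hl
        exact ⟨Sum.inr a, by simp [glueLeaf, ha]⟩
      · rintro ⟨x, hx⟩ w hw
        obtain ⟨v, rfl, hv⟩ := GE_inr_out hw
        match x, hx with
        | Sum.inr a, hx =>
          have ha : N₂.leaf a = u := by simpa [glueLeaf] using hx
          exact ((N₂.isLeaf_iff u).mpr ⟨a, ha⟩) v hv


lemma wf_of_acyclic {V : Type} [Finite V] {E : V → V → Prop}
    (h : ∀ v, ¬ TransGen E v v) : WellFounded E := by
  have : IsIrrefl V (TransGen E) := ⟨h⟩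
  exact Subrelation.wf (fun {a b} hab => TransGen.single hab)
    (Finite.wellFounded_of_trans_of_irrefl _)

lemma root_reaches {γ V : Type} [Finite V] (N : DAGOn γ V) (r : V)
    (hu : ∀ v, (∀ w, ¬ N.E w v) → v = r) : ∀ v, N.below r v := by
  have wf := wf_of_acyclic N.acyclic
  intro v
  refine wf.induction (C := fun v => N.below r v) v ?_
  intro v ih
  by_cases h : ∀ w, ¬ N.E w v
  · rw [hu v h]
    exact Relation.ReflTransGen.refl
  · push_neg at h
    obtain ⟨w, hw⟩ := h
    exact (ih w hw).tail hw

section Net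

variable {N₁ : DAGOn α V₁} {N₂ : DAGOn β V₂} {r₁ : V₁} {r₂ : V₂}

lemma glue_E : (glue N₁ N₂ r₁ r₂).E = GE N₁.E N₂.E r₁ r₂ := rfl

lemma below_lift_inl {u v : V₁} (h : N₁.below u v) :
    (glue N₁ N₂ r₁ r₂).below (some (Sum.inl u)) (some (Sum.inl v)) :=
  Relation.ReflTransGen.lift (fun x => some (Sum.inl x)) (fun _ _ e => GE.left e) _ _ h

lemma below_lift_inr {u v : V₂} (h : N₂.below u v) :
    (glue N₁ N₂ r₁ r₂).below (some (Sum.inr u)) (some (Sum.inr v)) :=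
  Relation.ReflTransGen.lift (fun x => some (Sum.inr x)) (fun _ _ e => GE.right e) _ _ h

lemma below_inl_iff {u v : V₁} :
    (glue N₁ N₂ r₁ r₂).below (some (Sum.inl u)) (some (Sum.inl v)) ↔ N₁.below u v := by
  constructor
  · intro h
    obtain ⟨w, hw, hr⟩ := reach_inl h
    obtain rfl : w = v := by simpa using hw.symm
    exact hr
  · exact below_lift_inl

lemma below_inr_iff {u v : V₂} :
    (glue N₁ N₂ r₁ r₂).below (some (Sum.inr u)) (some (Sum.inr v)) ↔ N₂.below u v := by
  constructor
  · intro h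
    obtain ⟨w, hw, hr⟩ := reach_inr h
    obtain rfl : w = v := by simpa using hw.symm
    exact hr
  · exact below_lift_inr

variable [Finite V₁] [Finite V₂]

lemma glue_reach_all (hu₁ : ∀ v, (∀ w, ¬ N₁.E w v) → v = r₁)
    (hu₂ : ∀ v, (∀ w, ¬ N₂.E w v) → v = r₂) :
    ∀ b, (glue N₁ N₂ r₁ r₂).below none b := by
  rintro (_ | (v | v))
  · exact .refl
  · exact Relation.ReflTransGen.head GE.root₁ (below_lift_inl (root_reaches N₁ r₁ hu₁ v))
  · exact Relation.ReflTransGen.head GE.root₂ (below_lift_inr (root_reaches N₂ r₂ hu₂ v))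

lemma glue_isNetwork (hu₁ : ∀ v, (∀ w, ¬ N₁.E w v) → v = r₁)
    (hu₂ : ∀ v, (∀ w, ¬ N₂.E w v) → v = r₂) : (glue N₁ N₂ r₁ r₂).IsNetwork := by
  refine ⟨none, fun w hw => hw.not_to_none, ?_⟩
  rintro (_ | (u | u)) hv
  · rfl
  · exfalso
    have hur : u = r₁ := hu₁ u (fun w hw => hv _ (GE.left hw))
    subst hur
    exact hv none GE.root₁
  · exfalso
    have hur : u = r₂ := hu₂ u (fun w hw => hv _ (GE.right hw))
    subst hur
    exact hv none GE.root₂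


lemma isCommonAnc_pair {γ V : Type} (N : DAGOn γ V) (v : V) (x y : γ) :
    N.IsCommonAnc v {x, y} ↔ N.below v (N.leaf x) ∧ N.below v (N.leaf y) := by
  constructor
  · intro h; exact ⟨h x (by simp), h y (by simp)⟩
  · rintro ⟨h1, h2⟩ z hz
    simp only [Set.mem_insert_iff, Set.mem_singleton_iff] at hz
    rcases hz with rfl | rfl <;> assumption

lemma glue_leaf_inl (a : α) :
    (glue N₁ N₂ r₁ r₂).leaf (Sum.inl a) = some (Sum.inl (N₁.leaf a)) := rfl

lemma glue_leaf_inr (b : β) :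
    (glue N₁ N₂ r₁ r₂).leaf (Sum.inr b) = some (Sum.inr (N₂.leaf b)) := rfl

lemma CA_inl_iff {a b : α} {u : V₁} :
    (glue N₁ N₂ r₁ r₂).IsCommonAnc (some (Sum.inl u)) {Sum.inl a, Sum.inl b} ↔
      N₁.IsCommonAnc u {a, b} := by
  rw [isCommonAnc_pair, isCommonAnc_pair, glue_leaf_inl, glue_leaf_inl,
    below_inl_iff, below_inl_iff]

lemma CA_inr_iff {a b : β} {u : V₂} :
    (glue N₁ N₂ r₁ r₂).IsCommonAnc (some (Sum.inr u)) {Sum.inr a, Sum.inr b} ↔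
      N₂.IsCommonAnc u {a, b} := by
  rw [isCommonAnc_pair, isCommonAnc_pair, glue_leaf_inr, glue_leaf_inr,
    below_inr_iff, below_inr_iff]

lemma notCA_inr_of_inl_mem {S : Set (α ⊕ β)} {a : α} (ha : Sum.inl a ∈ S) {u : V₂} :
    ¬ (glue N₁ N₂ r₁ r₂).IsCommonAnc (some (Sum.inr u)) S := by
  intro h
  obtain ⟨v, hv, -⟩ := reach_inr (h _ ha)
  simp [glue_leaf_inl] at hv

lemma notCA_inl_of_inr_mem {S : Set (α ⊕ β)} {b : β} (hb : Sum.inr b ∈ S) {u : V₁} :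
    ¬ (glue N₁ N₂ r₁ r₂).IsCommonAnc (some (Sum.inl u)) S := by
  intro h
  obtain ⟨v, hv, -⟩ := reach_inl (h _ hb)
  simp [glue_leaf_inr] at hv

variable (hu₁ : ∀ v, (∀ w, ¬ N₁.E w v) → v = r₁)
variable (hu₂ : ∀ v, (∀ w, ¬ N₂.E w v) → v = r₂)

include hu₁ hu₂

lemma LCA_inl_iff {a b : α} {w : Option (V₁ ⊕ V₂)} :
    (glue N₁ N₂ r₁ r₂).IsLCA w {Sum.inl a, Sum.inl b} ↔
      ∃ u, w = some (Sum.inl u) ∧ N₁.IsLCA u {a, b} := by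
  constructor
  · rintro ⟨hca, hmin⟩
    match w with
    | none =>
      exfalso
      have hca₁ : (glue N₁ N₂ r₁ r₂).IsCommonAnc (some (Sum.inl r₁)) {Sum.inl a, Sum.inl b} :=
        CA_inl_iff.mpr ((isCommonAnc_pair N₁ r₁ a b).mpr
          ⟨root_reaches N₁ r₁ hu₁ _, root_reaches N₁ r₁ hu₁ _⟩)
      have := hmin _ hca₁ (Relation.ReflTransGen.single GE.root₁)
      simp at this
    | some (Sum.inl u) =>
      refine ⟨u, rfl, CA_inl_iff.mp hca, ?_⟩
      intro u' hca' hb'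
      have := hmin (some (Sum.inl u')) (CA_inl_iff.mpr hca') (below_lift_inl hb')
      simpa using this
    | some (Sum.inr u) =>
      exact absurd hca (notCA_inr_of_inl_mem (Set.mem_insert _ _))
  · rintro ⟨u, rfl, hca, hmin⟩
    refine ⟨CA_inl_iff.mpr hca, ?_⟩
    intro w hcaw hbw
    obtain ⟨v, rfl, hbv⟩ := reach_inl hbw
    rw [hmin v (CA_inl_iff.mp hcaw) hbv]

lemma LCA_inr_iff {a b : β} {w : Option (V₁ ⊕ V₂)} :
    (glue N₁ N₂ r₁ r₂).IsLCA w {Sum.inr a, Sum.inr b} ↔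
      ∃ u, w = some (Sum.inr u) ∧ N₂.IsLCA u {a, b} := by
  constructor
  · rintro ⟨hca, hmin⟩
    match w with
    | none =>
      exfalso
      have hca₁ : (glue N₁ N₂ r₁ r₂).IsCommonAnc (some (Sum.inr r₂)) {Sum.inr a, Sum.inr b} :=
        CA_inr_iff.mpr ((isCommonAnc_pair N₂ r₂ a b).mpr
          ⟨root_reaches N₂ r₂ hu₂ _, root_reaches N₂ r₂ hu₂ _⟩)
      have := hmin _ hca₁ (Relation.ReflTransGen.single GE.root₂)
      simp at this
    | some (Sum.inr u) =>
      refine ⟨u, rfl, CA_inr_iff.mp hca, ?_⟩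
      intro u' hca' hb'
      have := hmin (some (Sum.inr u')) (CA_inr_iff.mpr hca') (below_lift_inr hb')
      simpa using this
    | some (Sum.inl u) =>
      exact absurd hca (notCA_inl_of_inr_mem (Set.mem_insert _ _))
  · rintro ⟨u, rfl, hca, hmin⟩
    refine ⟨CA_inr_iff.mpr hca, ?_⟩
    intro w hcaw hbw
    obtain ⟨v, rfl, hbv⟩ := reach_inr hbw
    rw [hmin v (CA_inr_iff.mp hcaw) hbv]

lemma LCA_mixed {S : Set (α ⊕ β)} {a : α} {b : β}
    (ha : Sum.inl a ∈ S) (hb : Sum.inr b ∈ S) {w : Option (V₁ ⊕ V₂)} :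
    (glue N₁ N₂ r₁ r₂).IsLCA w S ↔ w = none := by
  constructor
  · rintro ⟨hca, -⟩
    match w with
    | none => rfl
    | some (Sum.inl u) => exact absurd hca (notCA_inl_of_inr_mem hb)
    | some (Sum.inr u) => exact absurd hca (notCA_inr_of_inl_mem ha)
  · rintro rfl
    refine ⟨fun x _ => glue_reach_all hu₁ hu₂ _, ?_⟩
    intro w hcaw _
    match w with
    | none => rfl
    | some (Sum.inl u) => exact absurd hcaw (notCA_inl_of_inr_mem hb)
    | some (Sum.inr u) => exact absurd hcaw (notCA_inr_of_inl_mem ha)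

lemma glue_has2lca (h2₁ : N₁.Has2LCA) (h2₂ : N₂.Has2LCA) :
    (glue N₁ N₂ r₁ r₂).Has2LCA := by
  rintro (a | a) (b | b)
  · obtain ⟨v, hv, huniq⟩ := h2₁ a b
    refine ⟨some (Sum.inl v), (LCA_inl_iff hu₁ hu₂).mpr ⟨v, rfl, hv⟩, ?_⟩
    intro w hw
    obtain ⟨u, rfl, hu⟩ := (LCA_inl_iff hu₁ hu₂).mp hw
    rw [huniq u hu]
  · have ha : (Sum.inl a : α ⊕ β) ∈ ({Sum.inl a, Sum.inr b} : Set (α ⊕ β)) :=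
      Set.mem_insert _ _
    have hb : (Sum.inr b : α ⊕ β) ∈ ({Sum.inl a, Sum.inr b} : Set (α ⊕ β)) := by simp
    exact ⟨none, (LCA_mixed hu₁ hu₂ ha hb).mpr rfl,
      fun w hw => (LCA_mixed hu₁ hu₂ ha hb).mp hw⟩
  · have ha : (Sum.inl b : α ⊕ β) ∈ ({Sum.inr a, Sum.inl b} : Set (α ⊕ β)) := by simp
    have hb : (Sum.inr a : α ⊕ β) ∈ ({Sum.inr a, Sum.inl b} : Set (α ⊕ β)) :=
      Set.mem_insert _ _
    exact ⟨none, (LCA_mixed hu₁ hu₂ ha hb).mpr rfl,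
      fun w hw => (LCA_mixed hu₁ hu₂ ha hb).mp hw⟩
  · obtain ⟨v, hv, huniq⟩ := h2₂ a b
    refine ⟨some (Sum.inr v), (LCA_inr_iff hu₁ hu₂).mpr ⟨v, rfl, hv⟩, ?_⟩
    intro w hw
    obtain ⟨u, rfl, hu⟩ := (LCA_inr_iff hu₁ hu₂).mp hw
    rw [huniq u hu]


omit hu₁ hu₂

lemma not_hybrid_none : ¬ (glue N₁ N₂ r₁ r₂).IsHybrid none := by
  rintro ⟨a, b, -, ha, -⟩
  exact GE.not_to_none ha

lemma not_hybrid_inl_root (hr₁ : ∀ w, ¬ N₁.E w r₁) :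
    ¬ (glue N₁ N₂ r₁ r₂).IsHybrid (some (Sum.inl r₁)) := by
  rintro ⟨a, b, hab, ha, hb⟩
  cases ha with
  | root₁ =>
    cases hb with
    | root₁ => exact hab rfl
    | left h => exact hr₁ _ h
  | left h => exact hr₁ _ h

lemma not_hybrid_inr_root (hr₂ : ∀ w, ¬ N₂.E w r₂) :
    ¬ (glue N₁ N₂ r₁ r₂).IsHybrid (some (Sum.inr r₂)) := by
  rintro ⟨a, b, hab, ha, hb⟩
  cases ha with
  | root₂ =>
    cases hb with
    | root₂ => exact hab rfl
    | right h => exact hr₂ _ h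
  | right h => exact hr₂ _ h

lemma hybrid_inl_iff (hr₁ : ∀ w, ¬ N₁.E w r₁) {u : V₁} :
    (glue N₁ N₂ r₁ r₂).IsHybrid (some (Sum.inl u)) ↔ N₁.IsHybrid u := by
  constructor
  · rintro ⟨a, b, hab, ha, hb⟩
    cases ha with
    | root₁ =>
      cases hb with
      | root₁ => exact absurd rfl hab
      | left h => exact absurd h (hr₁ _)
    | left h1 =>
      cases hb with
      | root₁ => exact absurd h1 (hr₁ _)
      | left h2 =>
        exact ⟨_, _, fun he => hab (by rw [he]), h1, h2⟩
  · rintro ⟨a, b, hab, h1, h2⟩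
    exact ⟨some (Sum.inl a), some (Sum.inl b), by simpa using hab, GE.left h1, GE.left h2⟩

lemma hybrid_inr_iff (hr₂ : ∀ w, ¬ N₂.E w r₂) {u : V₂} :
    (glue N₁ N₂ r₁ r₂).IsHybrid (some (Sum.inr u)) ↔ N₂.IsHybrid u := by
  constructor
  · rintro ⟨a, b, hab, ha, hb⟩
    cases ha with
    | root₂ =>
      cases hb with
      | root₂ => exact absurd rfl hab
      | right h => exact absurd h (hr₂ _)
    | right h1 =>
      cases hb with
      | root₂ => exact absurd h1 (hr₂ _)
      | right h2 =>
        exact ⟨_, _, fun he => hab (by rw [he]), h1, h2⟩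
  · rintro ⟨a, b, hab, h1, h2⟩
    exact ⟨some (Sum.inr a), some (Sum.inr b), by simpa using hab, GE.right h1, GE.right h2⟩

/-- Within a set avoiding `none`, undirected paths starting in the left part stay there. -/
lemma path_inl_stay {S : Set (Option (V₁ ⊕ V₂))} (hS : none ∉ S) {u : V₁} {b}
    (h : Relation.ReflTransGen
      (fun a b => a ∈ S ∧ b ∈ S ∧ ((glue N₁ N₂ r₁ r₂).E a b ∨ (glue N₁ N₂ r₁ r₂).E b a))
      (some (Sum.inl u)) b) : ∃ v, b = some (Sum.inl v) := by
  induction h with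
  | refl => exact ⟨u, rfl⟩
  | tail _ hstep ih =>
    obtain ⟨v, rfl⟩ := ih
    obtain ⟨ha, hb, hE | hE⟩ := hstep
    · obtain ⟨w, rfl, -⟩ := GE_inl_out hE
      exact ⟨w, rfl⟩
    · cases hE with
      | root₁ => exact absurd hb hS
      | left _ => exact ⟨_, rfl⟩

lemma path_inr_stay {S : Set (Option (V₁ ⊕ V₂))} (hS : none ∉ S) {u : V₂} {b}
    (h : Relation.ReflTransGen
      (fun a b => a ∈ S ∧ b ∈ S ∧ ((glue N₁ N₂ r₁ r₂).E a b ∨ (glue N₁ N₂ r₁ r₂).E b a))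
      (some (Sum.inr u)) b) : ∃ v, b = some (Sum.inr v) := by
  induction h with
  | refl => exact ⟨u, rfl⟩
  | tail _ hstep ih =>
    obtain ⟨v, rfl⟩ := ih
    obtain ⟨ha, hb, hE | hE⟩ := hstep
    · obtain ⟨w, rfl, -⟩ := GE_inr_out hE
      exact ⟨w, rfl⟩
    · cases hE with
      | root₂ => exact absurd hb hS
      | right _ => exact ⟨_, rfl⟩

/-- Within a set avoiding `some (inl r₁)`, undirected paths from `none` stay in
`none` and the right part. -/
lemma path_from_none_l {S : Set (Option (V₁ ⊕ V₂))} (hS : some (Sum.inl r₁) ∉ S) {b}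
    (h : Relation.ReflTransGen
      (fun a b => a ∈ S ∧ b ∈ S ∧ ((glue N₁ N₂ r₁ r₂).E a b ∨ (glue N₁ N₂ r₁ r₂).E b a))
      none b) : b = none ∨ ∃ v, b = some (Sum.inr v) := by
  induction h with
  | refl => exact Or.inl rfl
  | tail _ hstep ih =>
    rcases ih with rfl | ⟨v, rfl⟩
    · obtain ⟨ha, hb, hE | hE⟩ := hstep
      · cases hE with
        | root₁ => exact absurd hb hS
        | root₂ => exact Or.inr ⟨_, rfl⟩
      · exact absurd hE GE.not_to_none
    · obtain ⟨ha, hb, hE | hE⟩ := hstep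
      · obtain ⟨w, rfl, -⟩ := GE_inr_out hE
        exact Or.inr ⟨w, rfl⟩
      · cases hE with
        | root₂ => exact Or.inl rfl
        | right _ => exact Or.inr ⟨_, rfl⟩

lemma path_from_none_r {S : Set (Option (V₁ ⊕ V₂))} (hS : some (Sum.inr r₂) ∉ S) {b}
    (h : Relation.ReflTransGen
      (fun a b => a ∈ S ∧ b ∈ S ∧ ((glue N₁ N₂ r₁ r₂).E a b ∨ (glue N₁ N₂ r₁ r₂).E b a))
      none b) : b = none ∨ ∃ v, b = some (Sum.inl v) := by
  induction h with
  | refl => exact Or.inl rfl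
  | tail _ hstep ih =>
    rcases ih with rfl | ⟨v, rfl⟩
    · obtain ⟨ha, hb, hE | hE⟩ := hstep
      · cases hE with
        | root₂ => exact absurd hb hS
        | root₁ => exact Or.inr ⟨_, rfl⟩
      · exact absurd hE GE.not_to_none
    · obtain ⟨ha, hb, hE | hE⟩ := hstep
      · obtain ⟨w, rfl, -⟩ := GE_inl_out hE
        exact Or.inr ⟨w, rfl⟩
      · cases hE with
        | root₁ => exact Or.inl rfl
        | left _ => exact Or.inr ⟨_, rfl⟩

/-- A biconnected set cannot contain vertices from both sides. -/
lemma biconn_nomix {S : Set (Option (V₁ ⊕ V₂))} (hS : (glue N₁ N₂ r₁ r₂).BiconnOn S)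
    {u : V₁} {w : V₂} (h₁ : some (Sum.inl u) ∈ S) (h₂ : some (Sum.inr w) ∈ S) : False := by
  by_cases hn : none ∈ S
  · have hp := hS.2 none hn _ ⟨h₁, by simp⟩ _ ⟨h₂, by simp⟩
    obtain ⟨v, hv⟩ := path_inl_stay (by simp) hp
    simp at hv
  · have hp := hS.1 _ h₁ _ h₂
    obtain ⟨v, hv⟩ := path_inl_stay hn hp
    simp at hv

/-- In a biconnected set containing the new root, the only left vertex can be `r₁`. -/
lemma biconn_none_inl {S : Set (Option (V₁ ⊕ V₂))} (hS : (glue N₁ N₂ r₁ r₂).BiconnOn S)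
    (hn : none ∈ S) {u : V₁} (hu : some (Sum.inl u) ∈ S) : u = r₁ := by
  by_contra h
  by_cases hr : some (Sum.inl r₁) ∈ S
  · have hp := hS.2 _ hr _ ⟨hn, by simp⟩ _ ⟨hu, by simp [h]⟩
    rcases path_from_none_l (by simp) hp with he | ⟨v, hv⟩
    · simp at he
    · simp at hv
  · have hp := hS.1 _ hn _ hu
    rcases path_from_none_l hr hp with he | ⟨v, hv⟩
    · simp at he
    · simp at hv

lemma biconn_none_inr {S : Set (Option (V₁ ⊕ V₂))} (hS : (glue N₁ N₂ r₁ r₂).BiconnOn S)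
    (hn : none ∈ S) {u : V₂} (hu : some (Sum.inr u) ∈ S) : u = r₂ := by
  by_contra h
  by_cases hr : some (Sum.inr r₂) ∈ S
  · have hp := hS.2 _ hr _ ⟨hn, by simp⟩ _ ⟨hu, by simp [h]⟩
    rcases path_from_none_r (by simp) hp with he | ⟨v, hv⟩
    · simp at he
    · simp at hv
  · have hp := hS.1 _ hn _ hu
    rcases path_from_none_r hr hp with he | ⟨v, hv⟩
    · simp at he
    · simp at hv


lemma inL_inj : Function.Injective (fun v : V₁ => (some (Sum.inl v) : Option (V₁ ⊕ V₂))) :=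
  fun a b h => by simpa using h

lemma inR_inj : Function.Injective (fun v : V₂ => (some (Sum.inr v) : Option (V₁ ⊕ V₂))) :=
  fun a b h => by simpa using h

lemma connOn_image_iff_l {S₁ : Set V₁} :
    (glue N₁ N₂ r₁ r₂).ConnOn ((fun v : V₁ => (some (Sum.inl v) : Option (V₁ ⊕ V₂))) '' S₁) ↔
      N₁.ConnOn S₁ := by
  constructor
  · intro h u hu v hv
    have hp := h _ ⟨u, hu, rfl⟩ _ ⟨v, hv, rfl⟩
    suffices H : ∀ b, Relation.ReflTransGen
        (fun a b => a ∈ ((fun v : V₁ => (some (Sum.inl v) : Option (V₁ ⊕ V₂))) '' S₁) ∧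
          b ∈ ((fun v : V₁ => (some (Sum.inl v) : Option (V₁ ⊕ V₂))) '' S₁) ∧
          ((glue N₁ N₂ r₁ r₂).E a b ∨ (glue N₁ N₂ r₁ r₂).E b a))
        (some (Sum.inl u)) b →
        ∀ v', b = some (Sum.inl v') →
        Relation.ReflTransGen (fun a b => a ∈ S₁ ∧ b ∈ S₁ ∧ (N₁.E a b ∨ N₁.E b a)) u v' by
      exact H _ hp v rfl
    intro b hb
    induction hb with
    | refl =>
      intro v' hv'
      obtain rfl : u = v' := by simpa using hv'
      exact Relation.ReflTransGen.refl
    | tail _ hstep ih =>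
      intro v' hbv
      subst hbv
      obtain ⟨hc, hbm, hE⟩ := hstep
      obtain ⟨c', hc'S, hcc⟩ := hc
      obtain ⟨v'', hv''S, hveq⟩ := hbm
      obtain rfl : v'' = v' := by simpa using hveq
      simp only at hcc
      subst hcc
      rcases hE with hE | hE
      · cases hE with
        | left e => exact (ih c' rfl).tail ⟨hc'S, hv''S, Or.inl e⟩
      · cases hE with
        | left e => exact (ih c' rfl).tail ⟨hc'S, hv''S, Or.inr e⟩
  · intro h u hu v hv
    obtain ⟨u', hu', rfl⟩ := hu
    obtain ⟨v', hv', rfl⟩ := hv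
    exact Relation.ReflTransGen.lift (fun x : V₁ => (some (Sum.inl x) : Option (V₁ ⊕ V₂)))
      (fun a b hab => ⟨⟨a, hab.1, rfl⟩, ⟨b, hab.2.1, rfl⟩,
        hab.2.2.elim (fun e => Or.inl (GE.left e)) (fun e => Or.inr (GE.left e))⟩) _ _
      (h u' hu' v' hv')

lemma connOn_image_iff_r {S₂ : Set V₂} :
    (glue N₁ N₂ r₁ r₂).ConnOn ((fun v : V₂ => (some (Sum.inr v) : Option (V₁ ⊕ V₂))) '' S₂) ↔
      N₂.ConnOn S₂ := by
  constructor
  · intro h u hu v hv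
    have hp := h _ ⟨u, hu, rfl⟩ _ ⟨v, hv, rfl⟩
    suffices H : ∀ b, Relation.ReflTransGen
        (fun a b => a ∈ ((fun v : V₂ => (some (Sum.inr v) : Option (V₁ ⊕ V₂))) '' S₂) ∧
          b ∈ ((fun v : V₂ => (some (Sum.inr v) : Option (V₁ ⊕ V₂))) '' S₂) ∧
          ((glue N₁ N₂ r₁ r₂).E a b ∨ (glue N₁ N₂ r₁ r₂).E b a))
        (some (Sum.inr u)) b →
        ∀ v', b = some (Sum.inr v') →
        Relation.ReflTransGen (fun a b => a ∈ S₂ ∧ b ∈ S₂ ∧ (N₂.E a b ∨ N₂.E b a)) u v' by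
      exact H _ hp v rfl
    intro b hb
    induction hb with
    | refl =>
      intro v' hv'
      obtain rfl : u = v' := by simpa using hv'
      exact Relation.ReflTransGen.refl
    | tail _ hstep ih =>
      intro v' hbv
      subst hbv
      obtain ⟨hc, hbm, hE⟩ := hstep
      obtain ⟨c', hc'S, hcc⟩ := hc
      obtain ⟨v'', hv''S, hveq⟩ := hbm
      obtain rfl : v'' = v' := by simpa using hveq
      simp only at hcc
      subst hcc
      rcases hE with hE | hE
      · cases hE with
        | right e => exact (ih c' rfl).tail ⟨hc'S, hv''S, Or.inl e⟩
      · cases hE with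
        | right e => exact (ih c' rfl).tail ⟨hc'S, hv''S, Or.inr e⟩
  · intro h u hu v hv
    obtain ⟨u', hu', rfl⟩ := hu
    obtain ⟨v', hv', rfl⟩ := hv
    exact Relation.ReflTransGen.lift (fun x : V₂ => (some (Sum.inr x) : Option (V₁ ⊕ V₂)))
      (fun a b hab => ⟨⟨a, hab.1, rfl⟩, ⟨b, hab.2.1, rfl⟩,
        hab.2.2.elim (fun e => Or.inl (GE.right e)) (fun e => Or.inr (GE.right e))⟩) _ _
      (h u' hu' v' hv')

lemma biconnOn_image_iff_l {S₁ : Set V₁} :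
    (glue N₁ N₂ r₁ r₂).BiconnOn ((fun v : V₁ => (some (Sum.inl v) : Option (V₁ ⊕ V₂))) '' S₁) ↔
      N₁.BiconnOn S₁ := by
  constructor
  · rintro ⟨h1, h2⟩
    refine ⟨connOn_image_iff_l.mp h1, fun v hv => ?_⟩
    have h3 := h2 _ ⟨v, hv, rfl⟩
    rw [show ((fun v : V₁ => (some (Sum.inl v) : Option (V₁ ⊕ V₂))) '' S₁) \
        {some (Sum.inl v)} =
        (fun v : V₁ => (some (Sum.inl v) : Option (V₁ ⊕ V₂))) '' (S₁ \ {v}) from by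
      rw [Set.image_diff inL_inj, Set.image_singleton]] at h3
    exact connOn_image_iff_l.mp h3
  · rintro ⟨h1, h2⟩
    refine ⟨connOn_image_iff_l.mpr h1, ?_⟩
    rintro w ⟨v, hv, rfl⟩
    rw [show ((fun v : V₁ => (some (Sum.inl v) : Option (V₁ ⊕ V₂))) '' S₁) \
        {some (Sum.inl v)} =
        (fun v : V₁ => (some (Sum.inl v) : Option (V₁ ⊕ V₂))) '' (S₁ \ {v}) from by
      rw [Set.image_diff inL_inj, Set.image_singleton]]
    exact connOn_image_iff_l.mpr (h2 v hv)

lemma biconnOn_image_iff_r {S₂ : Set V₂} :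
    (glue N₁ N₂ r₁ r₂).BiconnOn ((fun v : V₂ => (some (Sum.inr v) : Option (V₁ ⊕ V₂))) '' S₂) ↔
      N₂.BiconnOn S₂ := by
  constructor
  · rintro ⟨h1, h2⟩
    refine ⟨connOn_image_iff_r.mp h1, fun v hv => ?_⟩
    have h3 := h2 _ ⟨v, hv, rfl⟩
    rw [show ((fun v : V₂ => (some (Sum.inr v) : Option (V₁ ⊕ V₂))) '' S₂) \
        {some (Sum.inr v)} =
        (fun v : V₂ => (some (Sum.inr v) : Option (V₁ ⊕ V₂))) '' (S₂ \ {v}) from by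
      rw [Set.image_diff inR_inj, Set.image_singleton]] at h3
    exact connOn_image_iff_r.mp h3
  · rintro ⟨h1, h2⟩
    refine ⟨connOn_image_iff_r.mpr h1, ?_⟩
    rintro w ⟨v, hv, rfl⟩
    rw [show ((fun v : V₂ => (some (Sum.inr v) : Option (V₁ ⊕ V₂))) '' S₂) \
        {some (Sum.inr v)} =
        (fun v : V₂ => (some (Sum.inr v) : Option (V₁ ⊕ V₂))) '' (S₂ \ {v}) from by
      rw [Set.image_diff inR_inj, Set.image_singleton]]
    exact connOn_image_iff_r.mpr (h2 v hv)

lemma maxIn_image_iff_l {B₁ : Set V₁} {v : V₁} :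
    (glue N₁ N₂ r₁ r₂).MaxIn ((fun v : V₁ => (some (Sum.inl v) : Option (V₁ ⊕ V₂))) '' B₁)
      (some (Sum.inl v)) ↔ N₁.MaxIn B₁ v := by
  constructor
  · rintro ⟨hv, hmax⟩
    obtain ⟨v', hv'B, hveq⟩ := hv
    obtain rfl : v' = v := by simpa using hveq
    refine ⟨hv'B, fun u hu hb => ?_⟩
    have := hmax (some (Sum.inl u)) ⟨u, hu, rfl⟩ (below_lift_inl hb)
    simpa using this
  · rintro ⟨hv, hmax⟩
    refine ⟨⟨v, hv, rfl⟩, ?_⟩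
    rintro w ⟨u, hu, rfl⟩ hb
    simp only
    rw [hmax u hu (below_inl_iff.mp hb)]

lemma maxIn_image_iff_r {B₂ : Set V₂} {v : V₂} :
    (glue N₁ N₂ r₁ r₂).MaxIn ((fun v : V₂ => (some (Sum.inr v) : Option (V₁ ⊕ V₂))) '' B₂)
      (some (Sum.inr v)) ↔ N₂.MaxIn B₂ v := by
  constructor
  · rintro ⟨hv, hmax⟩
    obtain ⟨v', hv'B, hveq⟩ := hv
    obtain rfl : v' = v := by simpa using hveq
    refine ⟨hv'B, fun u hu hb => ?_⟩
    have := hmax (some (Sum.inr u)) ⟨u, hu, rfl⟩ (below_lift_inr hb)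
    simpa using this
  · rintro ⟨hv, hmax⟩
    refine ⟨⟨v, hv, rfl⟩, ?_⟩
    rintro w ⟨u, hu, rfl⟩ hb
    simp only
    rw [hmax u hu (below_inr_iff.mp hb)]


lemma glue_isLevel (hr₁ : ∀ w, ¬ N₁.E w r₁) (hr₂ : ∀ w, ¬ N₂.E w r₂)
    (hL₁ : N₁.IsLevel 1) (hL₂ : N₂.IsLevel 1) : (glue N₁ N₂ r₁ r₂).IsLevel 1 := by
  intro B hB
  set G := glue N₁ N₂ r₁ r₂ with hG
  by_cases hn : none ∈ B
  · have hempty : {v | v ∈ B ∧ G.IsHybrid v ∧ ¬ G.MaxIn B v} = ∅ := by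
      ext w
      simp only [Set.mem_setOf_eq, Set.mem_empty_iff_false, iff_false, not_and]
      intro hwB hhyb
      exfalso
      match w with
      | none => exact not_hybrid_none hhyb
      | some (Sum.inl u) =>
        obtain rfl : u = r₁ := biconn_none_inl hB.1 hn hwB
        exact not_hybrid_inl_root hr₁ hhyb
      | some (Sum.inr u) =>
        obtain rfl : u = r₂ := biconn_none_inr hB.1 hn hwB
        exact not_hybrid_inr_root hr₂ hhyb
    rw [hempty]
    simp
  · by_cases hl : ∃ u : V₁, some (Sum.inl u) ∈ B
    · obtain ⟨u₀, hu₀⟩ := hl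
      have hBL : ∀ w ∈ B, ∃ v : V₁, w = some (Sum.inl v) := by
        rintro (_ | (v | v)) hw
        · exact absurd hw hn
        · exact ⟨v, rfl⟩
        · exact absurd (biconn_nomix hB.1 hu₀ hw) not_false
      set B₁ : Set V₁ := {v : V₁ | some (Sum.inl v) ∈ B} with hB₁
      have hBeq : B = (fun v : V₁ => (some (Sum.inl v) : Option (V₁ ⊕ V₂))) '' B₁ := by
        ext w
        constructor
        · intro hw
          obtain ⟨v, rfl⟩ := hBL w hw
          exact ⟨v, hw, rfl⟩
        · rintro ⟨v, hv, rfl⟩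
          exact hv
      have hbic₁ : N₁.BiconnOn B₁ := biconnOn_image_iff_l.mp (hBeq ▸ hB.1)
      have hblock₁ : N₁.IsBlock B₁ := by
        refine ⟨hbic₁, fun B' hB' hsub => ?_⟩
        have h1 : G.BiconnOn ((fun v : V₁ => (some (Sum.inl v) : Option (V₁ ⊕ V₂))) '' B') :=
          biconnOn_image_iff_l.mpr hB'
        have h2 : (fun v : V₁ => (some (Sum.inl v) : Option (V₁ ⊕ V₂))) '' B' = B :=
          hB.2 _ h1 (by rw [hBeq]; exact Set.image_mono hsub)
        calc B' = (fun v : V₁ => (some (Sum.inl v) : Option (V₁ ⊕ V₂))) ⁻¹'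
              ((fun v : V₁ => (some (Sum.inl v) : Option (V₁ ⊕ V₂))) '' B') :=
            (Set.preimage_image_eq _ inL_inj).symm
          _ = (fun v : V₁ => (some (Sum.inl v) : Option (V₁ ⊕ V₂))) ⁻¹' B := by rw [h2]
          _ = B₁ := rfl
      have hset : {v | v ∈ B ∧ G.IsHybrid v ∧ ¬ G.MaxIn B v} =
          (fun v : V₁ => (some (Sum.inl v) : Option (V₁ ⊕ V₂))) ''
            {v | v ∈ B₁ ∧ N₁.IsHybrid v ∧ ¬ N₁.MaxIn B₁ v} := by
        ext w
        constructor
        · rintro ⟨hwB, hhyb, hmax⟩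
          obtain ⟨v, rfl⟩ := hBL w hwB
          refine ⟨v, ⟨hwB, (hybrid_inl_iff hr₁).mp hhyb, fun hm => hmax ?_⟩, rfl⟩
          rw [hBeq]
          exact maxIn_image_iff_l.mpr hm
        · rintro ⟨v, ⟨hv, hyb, hm⟩, rfl⟩
          refine ⟨hv, (hybrid_inl_iff hr₁).mpr hyb, fun h => hm ?_⟩
          rw [hBeq] at h
          exact maxIn_image_iff_l.mp h
      rw [hset, Set.ncard_image_of_injective _ inL_inj]
      exact hL₁ B₁ hblock₁
    · by_cases hr : ∃ u : V₂, some (Sum.inr u) ∈ B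
      · obtain ⟨u₀, hu₀⟩ := hr
        have hBR : ∀ w ∈ B, ∃ v : V₂, w = some (Sum.inr v) := by
          rintro (_ | (v | v)) hw
          · exact absurd hw hn
          · exact absurd (biconn_nomix hB.1 hw hu₀) not_false
          · exact ⟨v, rfl⟩
        set B₂ : Set V₂ := {v : V₂ | some (Sum.inr v) ∈ B} with hB₂
        have hBeq : B = (fun v : V₂ => (some (Sum.inr v) : Option (V₁ ⊕ V₂))) '' B₂ := by
          ext w
          constructor
          · intro hw
            obtain ⟨v, rfl⟩ := hBR w hw
            exact ⟨v, hw, rfl⟩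
          · rintro ⟨v, hv, rfl⟩
            exact hv
        have hbic₂ : N₂.BiconnOn B₂ := biconnOn_image_iff_r.mp (hBeq ▸ hB.1)
        have hblock₂ : N₂.IsBlock B₂ := by
          refine ⟨hbic₂, fun B' hB' hsub => ?_⟩
          have h1 : G.BiconnOn ((fun v : V₂ => (some (Sum.inr v) : Option (V₁ ⊕ V₂))) '' B') :=
            biconnOn_image_iff_r.mpr hB'
          have h2 : (fun v : V₂ => (some (Sum.inr v) : Option (V₁ ⊕ V₂))) '' B' = B :=
            hB.2 _ h1 (by rw [hBeq]; exact Set.image_mono hsub)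
          calc B' = (fun v : V₂ => (some (Sum.inr v) : Option (V₁ ⊕ V₂))) ⁻¹'
                ((fun v : V₂ => (some (Sum.inr v) : Option (V₁ ⊕ V₂))) '' B') :=
              (Set.preimage_image_eq _ inR_inj).symm
            _ = (fun v : V₂ => (some (Sum.inr v) : Option (V₁ ⊕ V₂))) ⁻¹' B := by rw [h2]
            _ = B₂ := rfl
        have hset : {v | v ∈ B ∧ G.IsHybrid v ∧ ¬ G.MaxIn B v} =
            (fun v : V₂ => (some (Sum.inr v) : Option (V₁ ⊕ V₂))) ''
              {v | v ∈ B₂ ∧ N₂.IsHybrid v ∧ ¬ N₂.MaxIn B₂ v} := by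
          ext w
          constructor
          · rintro ⟨hwB, hhyb, hmax⟩
            obtain ⟨v, rfl⟩ := hBR w hwB
            refine ⟨v, ⟨hwB, (hybrid_inr_iff hr₂).mp hhyb, fun hm => hmax ?_⟩, rfl⟩
            rw [hBeq]
            exact maxIn_image_iff_r.mpr hm
          · rintro ⟨v, ⟨hv, hyb, hm⟩, rfl⟩
            refine ⟨hv, (hybrid_inr_iff hr₂).mpr hyb, fun h => hm ?_⟩
            rw [hBeq] at h
            exact maxIn_image_iff_r.mp h
        rw [hset, Set.ncard_image_of_injective _ inR_inj]
        exact hL₂ B₂ hblock₂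
      · have hempty : {v | v ∈ B ∧ G.IsHybrid v ∧ ¬ G.MaxIn B v} = ∅ := by
          ext w
          simp only [Set.mem_setOf_eq, Set.mem_empty_iff_false, iff_false, not_and]
          intro hwB
          exfalso
          match w with
          | none => exact hn hwB
          | some (Sum.inl u) => exact hl ⟨u, hwB⟩
          | some (Sum.inr u) => exact hr ⟨u, hwB⟩
        rw [hempty]
        simp


/-- The labeling of the glued network. -/
def tGlue (t₁ : V₁ → Bool) (t₂ : V₂ → Bool) (c : Bool) : Option (V₁ ⊕ V₂) → Bool
  | none => c
  | some (Sum.inl v) => t₁ v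
  | some (Sum.inr v) => t₂ v

variable {t₁ : V₁ → Bool} {t₂ : V₂ → Bool}

lemma exists_lca_inl (hu₁ : ∀ v, (∀ w, ¬ N₁.E w v) → v = r₁)
    (hu₂ : ∀ v, (∀ w, ¬ N₂.E w v) → v = r₂) {a b : α} {c : Bool} :
    (∃ v, (glue N₁ N₂ r₁ r₂).IsLCA v {Sum.inl a, Sum.inl b} ∧ tGlue t₁ t₂ c v = true) ↔
      ∃ u, N₁.IsLCA u {a, b} ∧ t₁ u = true := by
  constructor
  · rintro ⟨v, hv, ht⟩
    obtain ⟨u, rfl, hu⟩ := (LCA_inl_iff hu₁ hu₂).mp hv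
    exact ⟨u, hu, ht⟩
  · rintro ⟨u, hu, ht⟩
    exact ⟨some (Sum.inl u), (LCA_inl_iff hu₁ hu₂).mpr ⟨u, rfl, hu⟩, ht⟩

lemma exists_lca_inr (hu₁ : ∀ v, (∀ w, ¬ N₁.E w v) → v = r₁)
    (hu₂ : ∀ v, (∀ w, ¬ N₂.E w v) → v = r₂) {a b : β} {c : Bool} :
    (∃ v, (glue N₁ N₂ r₁ r₂).IsLCA v {Sum.inr a, Sum.inr b} ∧ tGlue t₁ t₂ c v = true) ↔
      ∃ u, N₂.IsLCA u {a, b} ∧ t₂ u = true := by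
  constructor
  · rintro ⟨v, hv, ht⟩
    obtain ⟨u, rfl, hu⟩ := (LCA_inr_iff hu₁ hu₂).mp hv
    exact ⟨u, hu, ht⟩
  · rintro ⟨u, hu, ht⟩
    exact ⟨some (Sum.inr u), (LCA_inr_iff hu₁ hu₂).mpr ⟨u, rfl, hu⟩, ht⟩

lemma exists_lca_mixed (hu₁ : ∀ v, (∀ w, ¬ N₁.E w v) → v = r₁)
    (hu₂ : ∀ v, (∀ w, ¬ N₂.E w v) → v = r₂) {S : Set (α ⊕ β)} {a : α} {b : β}
    (ha : Sum.inl a ∈ S) (hb : Sum.inr b ∈ S) {c : Bool} :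
    (∃ v, (glue N₁ N₂ r₁ r₂).IsLCA v S ∧ tGlue t₁ t₂ c v = true) ↔ c = true := by
  constructor
  · rintro ⟨v, hv, ht⟩
    obtain rfl := (LCA_mixed hu₁ hu₂ ha hb).mp hv
    exact ht
  · rintro rfl
    exact ⟨none, (LCA_mixed hu₁ hu₂ ha hb).mpr rfl, rfl⟩

variable {H₁ : SimpleGraph α} {H₂ : SimpleGraph β}

lemma glue_explains_disj (hu₁ : ∀ v, (∀ w, ¬ N₁.E w v) → v = r₁)
    (hu₂ : ∀ v, (∀ w, ¬ N₂.E w v) → v = r₂)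
    (hE₁ : N₁.Explains t₁ H₁) (hE₂ : N₂.Explains t₂ H₂) :
    (glue N₁ N₂ r₁ r₂).Explains (tGlue t₁ t₂ false) (disjUnionGraph H₁ H₂) := by
  refine ⟨glue_has2lca hu₁ hu₂ hE₁.1 hE₂.1, ?_⟩
  rintro (a | a) (b | b) hxy
  · have hab : a ≠ b := fun h => hxy (by rw [h])
    rw [exists_lca_inl hu₁ hu₂, ← hE₁.2 a b hab]
    simp [disjUnionGraph, SimpleGraph.fromRel_adj, hab]
    exact fun h => h.symm
  · rw [exists_lca_mixed hu₁ hu₂ (Set.mem_insert _ _)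
      (show Sum.inr b ∈ ({Sum.inl a, Sum.inr b} : Set (α ⊕ β)) by simp)]
    simp [disjUnionGraph, SimpleGraph.fromRel_adj]
  · rw [exists_lca_mixed hu₁ hu₂
      (show Sum.inl b ∈ ({Sum.inr a, Sum.inl b} : Set (α ⊕ β)) by simp)
      (Set.mem_insert _ _)]
    simp [disjUnionGraph, SimpleGraph.fromRel_adj]
  · have hab : a ≠ b := fun h => hxy (by rw [h])
    rw [exists_lca_inr hu₁ hu₂, ← hE₂.2 a b hab]
    simp [disjUnionGraph, SimpleGraph.fromRel_adj, hab]
    exact fun h => h.symm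

lemma glue_explains_join (hu₁ : ∀ v, (∀ w, ¬ N₁.E w v) → v = r₁)
    (hu₂ : ∀ v, (∀ w, ¬ N₂.E w v) → v = r₂)
    (hE₁ : N₁.Explains t₁ H₁) (hE₂ : N₂.Explains t₂ H₂) :
    (glue N₁ N₂ r₁ r₂).Explains (tGlue t₁ t₂ true) (joinGraph H₁ H₂) := by
  refine ⟨glue_has2lca hu₁ hu₂ hE₁.1 hE₂.1, ?_⟩
  rintro (a | a) (b | b) hxy
  · have hab : a ≠ b := fun h => hxy (by rw [h])
    rw [exists_lca_inl hu₁ hu₂, ← hE₁.2 a b hab]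
    simp [joinGraph, SimpleGraph.fromRel_adj, hab]
    exact fun h => h.symm
  · rw [exists_lca_mixed hu₁ hu₂ (Set.mem_insert _ _)
      (show Sum.inr b ∈ ({Sum.inl a, Sum.inr b} : Set (α ⊕ β)) by simp)]
    simp [joinGraph, SimpleGraph.fromRel_adj]
  · rw [exists_lca_mixed hu₁ hu₂
      (show Sum.inl b ∈ ({Sum.inr a, Sum.inl b} : Set (α ⊕ β)) by simp)
      (Set.mem_insert _ _)]
    simp [joinGraph, SimpleGraph.fromRel_adj]
  · have hab : a ≠ b := fun h => hxy (by rw [h])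
    rw [exists_lca_inr hu₁ hu₂, ← hE₂.2 a b hab]
    simp [joinGraph, SimpleGraph.fromRel_adj, hab]
    exact fun h => h.symm

end Net

end GlueAux

theorem stmt18 {α β : Type} [Finite α] [Finite β]
    (G₁ : SimpleGraph α) (G₂ : SimpleGraph β)
    (h₁ : Level1Explainable G₁) (h₂ : Level1Explainable G₂) :
    Level1Explainable (disjUnionGraph G₁ G₂) ∧
      Level1Explainable (joinGraph G₁ G₂) := by
  obtain ⟨V₁, hF₁, N₁, t₁, hNet₁, hLvl₁, hExp₁⟩ := h₁
  obtain ⟨V₂, hF₂, N₂, t₂, hNet₂, hLvl₂, hExp₂⟩ := h₂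
  haveI : Finite V₁ := hF₁
  haveI : Finite V₂ := hF₂
  haveI : Fintype V₁ := Fintype.ofFinite V₁
  haveI : Fintype V₂ := Fintype.ofFinite V₂
  haveI : Finite (Option (V₁ ⊕ V₂)) := inferInstance
  obtain ⟨r₁, hr₁, hu₁⟩ := hNet₁
  obtain ⟨r₂, hr₂, hu₂⟩ := hNet₂
  constructor
  · exact ⟨Option (V₁ ⊕ V₂), inferInstance, glue N₁ N₂ r₁ r₂, tGlue t₁ t₂ false,
      glue_isNetwork hu₁ hu₂, glue_isLevel hr₁ hr₂ hLvl₁ hLvl₂,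
      glue_explains_disj hu₁ hu₂ hExp₁ hExp₂⟩
  · exact ⟨Option (V₁ ⊕ V₂), inferInstance, glue N₁ N₂ r₁ r₂, tGlue t₁ t₂ true,
      glue_isNetwork hu₁ hu₂, glue_isLevel hr₁ hr₂ hLvl₁ hLvl₂,
      glue_explains_join hu₁ hu₂ hExp₁ hExp₂⟩
end

section
/- The class of level-1 explainable graphs is closed under vertex substitution: if H and H' are vertex-disjoint level-1 explainable graphs and v ∈ V(H), then the graph H ⊙_v H' obtained by replacing v with H' (vertices of H' inherit exactly v's neighbors in H) is level-1 explainable. -/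
/-- The substitution `H ⊙_v H'`: replace the vertex `v` of `H` by the graph `H'`;
the vertices of `H'` inherit exactly the neighbours of `v` in `H`. -/
def substGraph {α β : Type} (H : SimpleGraph α) (v : α) (H' : SimpleGraph β) :
    SimpleGraph ({u : α // u ≠ v} ⊕ β) :=
  SimpleGraph.fromRel (fun x y =>
    (∃ a b : {u : α // u ≠ v}, x = Sum.inl a ∧ y = Sum.inl b ∧ H.Adj a.1 b.1) ∨
    (∃ a b : β, x = Sum.inr a ∧ y = Sum.inr b ∧ H'.Adj a b) ∨
    (∃ (a : {u : α // u ≠ v}) (b : β), x = Sum.inl a ∧ y = Sum.inr b ∧ H.Adj a.1 v))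


namespace Subst

open Relation

variable {α β V V' : Type} (N : DAGOn α V) (v : α) (N' : DAGOn β V') (r' : V')

/-- edge relation of glued network -/
def sE : ({w : V // w ≠ N.leaf v} ⊕ V') → ({w : V // w ≠ N.leaf v} ⊕ V') → Prop
  | .inl a, .inl b => N.E a.1 b.1
  | .inl a, .inr b => N.E a.1 (N.leaf v) ∧ b = r'
  | .inr _, .inl _ => False
  | .inr a, .inr b => N'.E a b

variable {N v N' r'}

lemma rtg_inr {a : V'} {u} (h : ReflTransGen (sE N v N' r') (.inr a) u) :
    ∃ b, u = .inr b ∧ ReflTransGen N'.E a b := by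
  induction h with
  | refl => exact ⟨a, rfl, .refl⟩
  | @tail m c _ h2 ih =>
    obtain ⟨b, rfl, hb⟩ := ih
    match c, h2 with
    | .inr c, h2 => exact ⟨c, rfl, hb.tail h2⟩

lemma rtg_inl {a} {u} (h : ReflTransGen (sE N v N' r') (.inl a) u) :
    (∃ b, u = .inl b ∧ ReflTransGen N.E a.1 b.1) ∨
    (∃ b, u = .inr b ∧ ReflTransGen N.E a.1 (N.leaf v) ∧ ReflTransGen N'.E r' b) := by
  induction h with
  | refl => exact .inl ⟨a, rfl, .refl⟩
  | @tail m c _ h2 ih =>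
    rcases ih with ⟨b, rfl, hb⟩ | ⟨b, rfl, hb, hb'⟩
    · match c, h2 with
      | .inl c, h2 => exact Or.inl ⟨c, rfl, hb.tail h2⟩
      | .inr c, h2 => exact Or.inr ⟨c, rfl, hb.tail h2.1, h2.2 ▸ ReflTransGen.refl⟩
    · match c, h2 with
      | .inr c, h2 => exact Or.inr ⟨c, rfl, hb, hb'.tail h2⟩

lemma lift_inr {a b : V'} (h : ReflTransGen N'.E a b) :
    ReflTransGen (sE N v N' r') (.inr a) (.inr b) :=
  ReflTransGen.lift Sum.inr (fun _ _ h => h) _ _ h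

/-- a vertex with no out-edges ends every path -/
lemma rtg_stop {V : Type} {E : V → V → Prop} {a u : V} (ha : ∀ w, ¬ E a w)
    (h : ReflTransGen E a u) : u = a := by
  rcases h.cases_head with h | ⟨c, hc, _⟩
  · exact h.symm
  · exact absurd hc (ha c)

/-- a vertex with no in-edges starts every path -/
lemma rtg_start {V : Type} {E : V → V → Prop} {a u : V} (ha : ∀ w, ¬ E w a)
    (h : ReflTransGen E u a) : u = a := by
  rcases h.cases_tail with h | ⟨c, _, hc⟩
  · exact h.symm
  · exact absurd hc (ha c)

lemma lift_inl (hlv : ∀ w, ¬ N.E (N.leaf v) w) {a b : V}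
    (h : ReflTransGen N.E a b) (hb : b ≠ N.leaf v) :
    ∀ (ha : a ≠ N.leaf v),
      ReflTransGen (sE N v N' r') (.inl ⟨a, ha⟩) (.inl ⟨b, hb⟩) := by
  induction h using ReflTransGen.head_induction_on with
  | refl => intro ha; rfl
  | @head x c hxc hcb ih =>
    intro hx
    have hc : c ≠ N.leaf v := by
      rintro rfl; exact hb (rtg_stop hlv hcb)
    exact ReflTransGen.head (show sE N v N' r' (.inl ⟨x, hx⟩) (.inl ⟨c, hc⟩) from hxc) (ih hc)

lemma lift_cross (hlv : ∀ w, ¬ N.E (N.leaf v) w) {a : V}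
    (h : ReflTransGen N.E a (N.leaf v)) :
    ∀ (ha : a ≠ N.leaf v), ReflTransGen (sE N v N' r') (.inl ⟨a, ha⟩) (.inr r') := by
  induction h using ReflTransGen.head_induction_on with
  | refl => intro ha; exact absurd rfl ha
  | @head x c hxc hcb ih =>
    intro hx
    by_cases hc : c = N.leaf v
    · subst hc
      exact ReflTransGen.single (show sE N v N' r' (.inl ⟨x, hx⟩) (.inr r') from ⟨hxc, rfl⟩)
    · exact ReflTransGen.head (show sE N v N' r' (.inl ⟨x, hx⟩) (.inl ⟨c, hc⟩) from hxc) (ih hc)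

/-- in a finite acyclic digraph with a unique source, the source reaches everything -/
lemma root_reaches {V : Type} [Finite V] {E : V → V → Prop}
    (hac : ∀ x, ¬ Relation.TransGen E x x) {r : V}
    (hr : ∀ w, (∀ u, ¬ E u w) → w = r) : ∀ b, ReflTransGen E r b := by
  haveI : IsTrans V (Relation.TransGen E) := ⟨fun _ _ _ => TransGen.trans⟩
  haveI : IsIrrefl V (Relation.TransGen E) := ⟨hac⟩
  have wf : WellFounded (Relation.TransGen E) :=
    Finite.wellFounded_of_trans_of_irrefl _
  have wfE : WellFounded E := Subrelation.wf (fun h => TransGen.single h) wf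
  intro b
  induction b using wfE.induction with
  | _ b ih =>
    by_cases hb : ∀ u, ¬ E u b
    · exact (hr b hb) ▸ ReflTransGen.refl
    · push_neg at hb
      obtain ⟨u, hu⟩ := hb
      exact (ih u hu).tail hu

lemma leaf_no_out (x : α) : ∀ w, ¬ N.E (N.leaf x) w :=
  (N.isLeaf_iff _).mpr ⟨x, rfl⟩

variable (N v N' r')

/-- the glued DAG -/
def sDAG : DAGOn ({u : α // u ≠ v} ⊕ β) ({w : V // w ≠ N.leaf v} ⊕ V') where
  E := sE N v N' r'
  acyclic := by
    rintro (a | a) h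
    · obtain ⟨m, h1, h2⟩ := (TransGen.head'_iff).1 h
      match m, h1, h2 with
      | .inl m, h1, h2 =>
        rcases rtg_inl h2 with ⟨b, hb, hb2⟩ | ⟨b, hb, _⟩
        · obtain rfl := Sum.inl.inj hb
          exact N.acyclic a.1 (TransGen.head' h1 hb2)
        · exact absurd hb (by simp)
      | .inr m, h1, h2 =>
        obtain ⟨b, hb, _⟩ := rtg_inr h2
        exact absurd hb (by simp)
    · obtain ⟨m, h1, h2⟩ := (TransGen.head'_iff).1 h
      match m, h1, h2 with
      | .inr m, h1, h2 =>
        obtain ⟨b, hb, hb2⟩ := rtg_inr h2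
        obtain rfl := Sum.inr.inj hb
        exact N'.acyclic a (TransGen.head' h1 hb2)
  leaf := fun p => match p with
    | .inl u => .inl ⟨N.leaf u.1, fun h => u.2 (N.leaf_inj h)⟩
    | .inr b => .inr (N'.leaf b)
  leaf_inj := by
    rintro (a | a) (b | b) h <;> simp only at h
    · injection h with h; exact congrArg Sum.inl (Subtype.ext (N.leaf_inj (congrArg Subtype.val h)))
    · exact absurd h (by simp)
    · exact absurd h (by simp)
    · injection h with h; exact congrArg Sum.inr (N'.leaf_inj h)
  isLeaf_iff := by
    rintro (a | a)
    · constructor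
      · intro hl
        have h1 : ∀ b, ¬ N.E a.1 b := by
          intro b hb
          by_cases hbv : b = N.leaf v
          · exact hl (.inr r') ⟨hbv ▸ hb, rfl⟩
          · exact hl (.inl ⟨b, hbv⟩) hb
        obtain ⟨x, hx⟩ := (N.isLeaf_iff a.1).1 h1
        have hxv : x ≠ v := fun h => a.2 (h ▸ hx).symm
        exact ⟨.inl ⟨x, hxv⟩, by simp only; congr 1; exact Subtype.ext hx⟩
      · rintro ⟨p, hp⟩ w hw
        match p, hp with
        | .inl u, hp =>
          obtain hp : N.leaf u.1 = a.1 := congrArg Subtype.val (Sum.inl.inj hp)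
          match w, hw with
          | .inl b, hw => exact leaf_no_out u.1 b.1 (by rw [hp]; exact hw)
          | .inr b, hw => exact leaf_no_out u.1 (N.leaf v) (by rw [hp]; exact hw.1)
    · constructor
      · intro hl
        have h1 : ∀ b, ¬ N'.E a b := fun b hb => hl (.inr b) hb
        obtain ⟨y, hy⟩ := (N'.isLeaf_iff a).1 h1
        exact ⟨.inr y, by simp only; rw [hy]⟩
      · rintro ⟨p, hp⟩ w hw
        match p, hp with
        | .inr u, hp =>
          obtain rfl : N'.leaf u = a := Sum.inr.inj hp
          match w, hw with
          | .inr b, hw => exact ((N'.isLeaf_iff _).2 ⟨u, rfl⟩) b hw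

variable {N v N' r'}

lemma below_inl_inl {a b} : (sDAG N v N' r').below (.inl a) (.inl b) ↔ N.below a.1 b.1 := by
  constructor
  · intro h
    rcases rtg_inl h with ⟨c, hc, h2⟩ | ⟨c, hc, _⟩
    · obtain rfl := Sum.inl.inj hc; exact h2
    · exact absurd hc (by simp)
  · intro h
    have := lift_inl (N' := N') (r' := r') (leaf_no_out v) h b.2 a.2
    exact this

lemma below_inl_inr {a : {w : V // w ≠ N.leaf v}} {b} :
    (sDAG N v N' r').below (.inl a) (.inr b) ↔
      N.below a.1 (N.leaf v) ∧ N'.below r' b := by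
  constructor
  · intro h
    rcases rtg_inl h with ⟨c, hc, _⟩ | ⟨c, hc, h2, h3⟩
    · exact absurd hc (by simp)
    · obtain rfl := Sum.inr.inj hc; exact ⟨h2, h3⟩
  · rintro ⟨h1, h2⟩
    have ha : a.1 ≠ N.leaf v := a.2
    have := (lift_cross (N' := N') (r' := r') (leaf_no_out v) h1 ha).trans
      (lift_inr (N := N) (v := v) h2)
    exact this

lemma below_inr_inr {a b : V'} :
    (sDAG N v N' r').below (.inr a) (.inr b) ↔ N'.below a b := by
  constructor
  · intro h
    obtain ⟨c, hc, h2⟩ := rtg_inr h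
    obtain rfl := Sum.inr.inj hc; exact h2
  · exact lift_inr

lemma below_inr_inl {a : V'} {b} : ¬ (sDAG N v N' r').below (.inr a) (.inl b) := by
  intro h
  obtain ⟨c, hc, _⟩ := rtg_inr h
  exact absurd hc (by simp)

lemma commAnc_pair {γ W : Type} (M : DAGOn γ W) (z : W) (x y : γ) :
    M.IsCommonAnc z {x, y} ↔ M.below z (M.leaf x) ∧ M.below z (M.leaf y) := by
  simp [DAGOn.IsCommonAnc]

lemma sleaf_inl (u : {u : α // u ≠ v}) :
    (sDAG N v N' r').leaf (.inl u) = .inl ⟨N.leaf u.1, fun h => u.2 (N.leaf_inj h)⟩ := rfl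

lemma sleaf_inr (b : β) : (sDAG N v N' r').leaf (.inr b) = .inr (N'.leaf b) := rfl

section LCA

variable [Finite V'] (hr'1 : ∀ u, ¬ N'.E u r') (hr'2 : ∀ w, (∀ u, ¬ N'.E u w) → w = r')

include hr'2 in
lemma lcaII {x y : β} {z} :
    (sDAG N v N' r').IsLCA z {.inr x, .inr y} ↔ ∃ c, z = .inr c ∧ N'.IsLCA c {x, y} := by
  have hreach : ∀ b, ReflTransGen N'.E r' b := root_reaches N'.acyclic hr'2
  constructor
  · rintro ⟨hca, hmin⟩
    match z with
    | .inl a =>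
      exfalso
      have h1 : N.below a.1 (N.leaf v) :=
        (below_inl_inr.1 ((commAnc_pair _ _ _ _).1 hca).1).1
      have hra : (sDAG N v N' r').IsCommonAnc (.inr r') {.inr x, .inr y} :=
        (commAnc_pair _ _ _ _).2 ⟨below_inr_inr.2 (hreach _), below_inr_inr.2 (hreach _)⟩
      have hba : (sDAG N v N' r').below (.inl a) (.inr r') :=
        below_inl_inr.2 ⟨h1, ReflTransGen.refl⟩
      exact absurd (hmin _ hra hba) (by simp)
    | .inr c =>
      refine ⟨c, rfl, (commAnc_pair N' c x y).2 ?_, ?_⟩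
      · have := (commAnc_pair _ _ _ _).1 hca
        exact ⟨below_inr_inr.1 this.1, below_inr_inr.1 this.2⟩
      · intro u hu hcu
        have hu' : (sDAG N v N' r').IsCommonAnc (.inr u) {.inr x, .inr y} :=
          (commAnc_pair _ _ _ _).2
            ⟨below_inr_inr.2 (((commAnc_pair N' u x y).1 hu).1),
             below_inr_inr.2 (((commAnc_pair N' u x y).1 hu).2)⟩
        exact Sum.inr.inj (hmin _ hu' (below_inr_inr.2 hcu))
  · rintro ⟨c, rfl, hc1, hc2⟩
    constructor
    · have := (commAnc_pair N' c x y).1 hc1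
      exact (commAnc_pair _ _ _ _).2 ⟨below_inr_inr.2 this.1, below_inr_inr.2 this.2⟩
    · intro u hu hcu
      match u with
      | .inl a => exact absurd hcu below_inr_inl
      | .inr d =>
        have hd : N'.IsCommonAnc d {x, y} := by
          have := (commAnc_pair _ _ _ _).1 hu
          exact (commAnc_pair N' d x y).2 ⟨below_inr_inr.1 this.1, below_inr_inr.1 this.2⟩
        exact congrArg Sum.inr (hc2 d hd (below_inr_inr.1 hcu))

omit [Finite V'] hr'2 in
lemma commAnc_ne_leafv {u : V} {x : α} (hx : x ≠ v) (h : N.below u (N.leaf x)) :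
    u ≠ N.leaf v := by
  rintro rfl
  exact hx (N.leaf_inj (rtg_stop (leaf_no_out v) h))

omit [Finite V'] hr'2 in
lemma lcaI {x y : {u : α // u ≠ v}} {z} :
    (sDAG N v N' r').IsLCA z {.inl x, .inl y} ↔
      ∃ a, z = .inl a ∧ N.IsLCA a.1 {x.1, y.1} := by
  constructor
  · rintro ⟨hca, hmin⟩
    match z with
    | .inr c =>
      exact absurd ((commAnc_pair _ _ _ _).1 hca).1 below_inr_inl
    | .inl a =>
      have hc := (commAnc_pair _ _ _ _).1 hca
      refine ⟨a, rfl, (commAnc_pair N a.1 x.1 y.1).2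
        ⟨below_inl_inl.1 hc.1, below_inl_inl.1 hc.2⟩, ?_⟩
      intro u hu hau
      have hcu := (commAnc_pair N u x.1 y.1).1 hu
      have hun : u ≠ N.leaf v := commAnc_ne_leafv x.2 hcu.1
      have hu' : (sDAG N v N' r').IsCommonAnc (.inl ⟨u, hun⟩) {.inl x, .inl y} :=
        (commAnc_pair _ _ _ _).2 ⟨below_inl_inl.2 hcu.1, below_inl_inl.2 hcu.2⟩
      have := hmin _ hu' (below_inl_inl.2 hau)
      exact congrArg Subtype.val (Sum.inl.inj this)
  · rintro ⟨a, rfl, hc1, hc2⟩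
    have hc := (commAnc_pair N a.1 x.1 y.1).1 hc1
    refine ⟨(commAnc_pair _ _ _ _).2 ⟨below_inl_inl.2 hc.1, below_inl_inl.2 hc.2⟩, ?_⟩
    intro u hu hau
    match u with
    | .inr c =>
      exact absurd ((commAnc_pair _ _ _ _).1 hu).1 below_inr_inl
    | .inl b =>
      have hcb := (commAnc_pair _ _ _ _).1 hu
      have : b.1 = a.1 := hc2 b.1
        ((commAnc_pair N b.1 x.1 y.1).2 ⟨below_inl_inl.1 hcb.1, below_inl_inl.1 hcb.2⟩)
        (below_inl_inl.1 hau)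
      exact congrArg Sum.inl (Subtype.ext this)

include hr'2 in
lemma lcaIII {x : {u : α // u ≠ v}} {y : β} {z} :
    (sDAG N v N' r').IsLCA z {.inl x, .inr y} ↔
      ∃ (a : V) (ha : a ≠ N.leaf v), z = .inl ⟨a, ha⟩ ∧ N.IsLCA a {x.1, v} := by
  have hreach : ∀ b, ReflTransGen N'.E r' b := root_reaches N'.acyclic hr'2
  have key : ∀ w, (sDAG N v N' r').IsCommonAnc (.inl w) {.inl x, .inr y} ↔
      N.IsCommonAnc w.1 {x.1, v} := by
    intro w
    rw [commAnc_pair, commAnc_pair, sleaf_inl, sleaf_inr, below_inl_inl, below_inl_inr]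
    constructor
    · rintro ⟨h1, h2, _⟩; exact ⟨h1, h2⟩
    · rintro ⟨h1, h2⟩; exact ⟨h1, h2, hreach _⟩
  constructor
  · rintro ⟨hca, hmin⟩
    match z with
    | .inr c =>
      exact absurd ((commAnc_pair _ _ _ _).1 hca).1 below_inr_inl
    | .inl a =>
      refine ⟨a.1, a.2, rfl, (key a).1 hca, ?_⟩
      intro u hu hau
      have hun : u ≠ N.leaf v :=
        commAnc_ne_leafv x.2 (((commAnc_pair N u x.1 v).1 hu).1)
      have := hmin (.inl ⟨u, hun⟩) ((key ⟨u, hun⟩).2 hu) (below_inl_inl.2 hau)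
      exact congrArg Subtype.val (Sum.inl.inj this)
  · rintro ⟨a, ha, rfl, hc1, hc2⟩
    refine ⟨(key _).2 hc1, ?_⟩
    intro u hu hau
    match u with
    | .inr c =>
      exact absurd ((commAnc_pair _ _ _ _).1 hu).1 below_inr_inl
    | .inl b =>
      have : b.1 = a := hc2 b.1 ((key b).1 hu) (below_inl_inl.1 hau)
      exact congrArg Sum.inl (Subtype.ext this)

end LCA

section Network

variable (hr'1 : ∀ u, ¬ N'.E u r') (hr'2 : ∀ w, (∀ u, ¬ N'.E u w) → w = r')

include hr'1 hr'2 in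
lemma sNetwork (hN : N.IsNetwork) : (sDAG N v N' r').IsNetwork := by
  obtain ⟨r, hr0, hru⟩ := hN
  have hinl_src : ∀ a : {w : V // w ≠ N.leaf v},
      (∀ w, ¬ (sDAG N v N' r').E w (.inl a)) → a.1 = r := by
    intro a ha
    apply hru
    intro u hu
    by_cases huv : u = N.leaf v
    · exact leaf_no_out v a.1 (huv ▸ hu)
    · exact ha (.inl ⟨u, huv⟩) hu
  by_cases hrv : r = N.leaf v
  · refine ⟨.inr r', ?_, ?_⟩
    · rintro (w | w) hw
      · exact hr0 w.1 (hrv ▸ hw.1)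
      · exact hr'1 w hw
    · rintro (a | a) ha
      · exact absurd (hinl_src a ha) (hrv ▸ a.2)
      · exact congrArg Sum.inr (hr'2 a (fun u hu => ha (.inr u) hu))
  · refine ⟨.inl ⟨r, hrv⟩, ?_, ?_⟩
    · rintro (w | w) hw
      · exact hr0 w.1 hw
      · exact hw
    · rintro (a | a) ha
      · exact congrArg Sum.inl (Subtype.ext (hinl_src a ha))
      · exfalso
        obtain rfl : a = r' := hr'2 a (fun u hu => ha (.inr u) hu)
        have : ¬ ∀ w, ¬ N.E w (N.leaf v) := fun hh => hrv (hru _ hh).symm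
        push_neg at this
        obtain ⟨u, hu⟩ := this
        have huv : u ≠ N.leaf v := fun h => leaf_no_out v (N.leaf v) (h ▸ hu)
        exact ha (.inl ⟨u, huv⟩) ⟨hu, rfl⟩

end Network

section Conn

/-- paths avoiding `inr r'` cannot cross from the `inl` side -/
lemma stays_inl {S : Set ({w : V // w ≠ N.leaf v} ⊕ V')} (hS : Sum.inr r' ∉ S)
    {x y} (h : Relation.ReflTransGen
      (fun a b => a ∈ S ∧ b ∈ S ∧ ((sDAG N v N' r').E a b ∨ (sDAG N v N' r').E b a)) x y)
    {a} (hx : x = .inl a) : ∃ b, y = .inl b := by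
  induction h with
  | refl => exact ⟨a, hx⟩
  | @tail m c _ h2 ih =>
    obtain ⟨b, rfl⟩ := ih
    match c, h2 with
    | .inl c, _ => exact ⟨c, rfl⟩
    | .inr c, h2 =>
      rcases h2.2.2 with he | he
      · exact absurd (he.2 ▸ h2.2.1) hS
      · exact absurd he (by exact id)

lemma no_cross {B : Set ({w : V // w ≠ N.leaf v} ⊕ V')}
    (hB : (sDAG N v N' r').BiconnOn B) {a b} (ha : .inl a ∈ B) (hbne : b ≠ r')
    (hb : .inr b ∈ B) : False := by
  by_cases hrB : Sum.inr r' ∈ B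
  · have hc := hB.2 _ hrB (.inl a) ⟨ha, by simp⟩ (.inr b)
      ⟨hb, by simp [Sum.inr.injEq, hbne]⟩
    obtain ⟨c, hc⟩ := stays_inl (by simp) hc rfl
    exact absurd hc (by simp)
  · have hc := hB.1 (.inl a) ha (.inr b) hb
    obtain ⟨c, hc⟩ := stays_inl hrB hc rfl
    exact absurd hc (by simp)

/-- transfer of connectivity along an injective edge-preserving map -/
lemma rtg_image {γ1 W1 γ2 W2 : Type} (M1 : DAGOn γ1 W1) (M2 : DAGOn γ2 W2)
    (f : W1 → W2) (hf : Function.Injective f)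
    (hE : ∀ a b, M1.E a b ↔ M2.E (f a) (f b)) (S : Set W1) {a b : W1} :
    Relation.ReflTransGen (fun x y => x ∈ S ∧ y ∈ S ∧ (M1.E x y ∨ M1.E y x)) a b ↔
    Relation.ReflTransGen
      (fun x y => x ∈ f '' S ∧ y ∈ f '' S ∧ (M2.E x y ∨ M2.E y x)) (f a) (f b) := by
  constructor
  · refine Relation.ReflTransGen.lift f (fun x y hxy => ?_) _ _
    exact ⟨⟨x, hxy.1, rfl⟩, ⟨y, hxy.2.1, rfl⟩,
      hxy.2.2.imp (fun h => (hE x y).1 h) (fun h => (hE y x).1 h)⟩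
  · intro h
    have key : ∀ x y, Relation.ReflTransGen
        (fun x y => x ∈ f '' S ∧ y ∈ f '' S ∧ (M2.E x y ∨ M2.E y x)) x y →
        ∀ c d, x = f c → y = f d → Relation.ReflTransGen
          (fun x y => x ∈ S ∧ y ∈ S ∧ (M1.E x y ∨ M1.E y x)) c d := by
      intro x y hxy
      induction hxy with
      | refl => rintro c d rfl hd; obtain rfl := hf hd; exact .refl
      | @tail m z _ h2 ih =>
        rintro c d rfl rfl
        obtain ⟨e, heS, rfl⟩ := h2.1
        obtain ⟨e', he'S, he'⟩ := h2.2.1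
        obtain rfl := hf he'.symm
        exact (ih c e rfl rfl).tail
          ⟨heS, he'S, h2.2.2.imp (fun h => (hE e d).2 h) (fun h => (hE d e).2 h)⟩
    exact key _ _ h a b rfl rfl

lemma connOn_image {γ1 W1 γ2 W2 : Type} (M1 : DAGOn γ1 W1) (M2 : DAGOn γ2 W2)
    (f : W1 → W2) (hf : Function.Injective f)
    (hE : ∀ a b, M1.E a b ↔ M2.E (f a) (f b)) (S : Set W1) :
    M1.ConnOn S ↔ M2.ConnOn (f '' S) := by
  constructor
  · rintro h u ⟨a, ha, rfl⟩ w ⟨b, hb, rfl⟩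
    exact (rtg_image M1 M2 f hf hE S).1 (h a ha b hb)
  · intro h a ha b hb
    exact (rtg_image M1 M2 f hf hE S).2 (h (f a) ⟨a, ha, rfl⟩ (f b) ⟨b, hb, rfl⟩)

lemma biconnOn_image {γ1 W1 γ2 W2 : Type} (M1 : DAGOn γ1 W1) (M2 : DAGOn γ2 W2)
    (f : W1 → W2) (hf : Function.Injective f)
    (hE : ∀ a b, M1.E a b ↔ M2.E (f a) (f b)) (S : Set W1) :
    M1.BiconnOn S ↔ M2.BiconnOn (f '' S) := by
  constructor
  · rintro ⟨h1, h2⟩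
    refine ⟨(connOn_image M1 M2 f hf hE S).1 h1, ?_⟩
    rintro x ⟨a, ha, rfl⟩
    have := (connOn_image M1 M2 f hf hE (S \ {a})).1 (h2 a ha)
    rwa [Set.image_diff hf, Set.image_singleton] at this
  · rintro ⟨h1, h2⟩
    refine ⟨(connOn_image M1 M2 f hf hE S).2 h1, ?_⟩
    intro a ha
    apply (connOn_image M1 M2 f hf hE (S \ {a})).2
    rw [Set.image_diff hf, Set.image_singleton]
    exact h2 (f a) ⟨a, ha, rfl⟩

lemma exists_block_superset {γ W : Type} [Finite W] (M : DAGOn γ W) {C : Set W}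
    (hC : M.BiconnOn C) : ∃ D, M.IsBlock D ∧ C ⊆ D := by
  have hfin : {D : Set W | M.BiconnOn D ∧ C ⊆ D}.Finite := Set.toFinite _
  obtain ⟨D, hD, hDmax⟩ := Set.Finite.exists_maximalFor id _ hfin ⟨C, hC, le_refl C⟩
  refine ⟨D, ⟨hD.1, ?_⟩, hD.2⟩
  intro B' hB' hsub
  exact le_antisymm (hDmax ⟨hB', hD.2.trans hsub⟩ hsub) hsub

end Conn

section Level

/-- inverse of the projection used for blocks on the `N` side -/
noncomputable def psi (N : DAGOn α V) (v : α) (r' : V') : V → {w : V // w ≠ N.leaf v} ⊕ V' :=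
  fun w => @dite _ (w = N.leaf v) (Classical.dec _) (fun _ => .inr r') (fun h => .inl ⟨w, h⟩)

lemma psi_inj : Function.Injective (psi N v r' : V → {w : V // w ≠ N.leaf v} ⊕ V') := by
  intro a b h
  unfold psi at h
  rcases Classical.em (a = N.leaf v) with h1 | h1 <;>
    rcases Classical.em (b = N.leaf v) with h2 | h2
  · exact h1.trans h2.symm
  · rw [dif_pos h1, dif_neg h2] at h; exact absurd h (by simp)
  · rw [dif_neg h1, dif_pos h2] at h; exact absurd h (by simp)
  · rw [dif_neg h1, dif_neg h2] at h; exact congrArg Subtype.val (Sum.inl.inj h)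

lemma psi_E : ∀ a b, N.E a b ↔ (sDAG N v N' r').E (psi N v r' a) (psi N v r' b) := by
  intro a b
  unfold psi
  rcases Classical.em (a = N.leaf v) with h1 | h1 <;>
    rcases Classical.em (b = N.leaf v) with h2 | h2
  · subst h1; subst h2
    rw [dif_pos rfl]
    exact iff_of_false (leaf_no_out v _) (fun h => N'.acyclic r' (TransGen.single h))
  · subst h1
    rw [dif_pos rfl, dif_neg h2]
    exact iff_of_false (leaf_no_out v b) (fun h => h)
  · subst h2
    rw [dif_neg h1, dif_pos rfl]
    exact ⟨fun h => ⟨h, rfl⟩, fun h => h.1⟩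
  · rw [dif_neg h1, dif_neg h2]
    exact Iff.rfl

lemma psi_below {a b : V}
    (h : (sDAG N v N' r').below (psi N v r' a) (psi N v r' b)) : N.below a b := by
  unfold psi at h
  split_ifs at h with h1 h2 h2
  · subst h1; subst h2; exact ReflTransGen.refl
  · exact absurd h below_inr_inl
  · subst h2; exact (below_inl_inr.1 h).1
  · exact below_inl_inl.1 h

lemma psi_hybrid (hr'1 : ∀ u, ¬ N'.E u r') {a : V}
    (h : (sDAG N v N' r').IsHybrid (psi N v r' a)) : N.IsHybrid a := by
  obtain ⟨u, w, huw, hu, hw⟩ := h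
  unfold psi at hu hw
  split_ifs at hu hw with h1
  · subst h1
    match u, w, hu, hw, huw with
    | .inl u, .inl w, hu, hw, huw =>
      exact ⟨u.1, w.1, fun h => huw (congrArg Sum.inl (Subtype.ext h)), hu.1, hw.1⟩
    | .inl u, .inr w, hu, hw, _ => exact absurd hw (hr'1 w)
    | .inr u, .inl w, hu, _, _ => exact absurd hu (hr'1 u)
    | .inr u, .inr w, hu, _, _ => exact absurd hu (hr'1 u)
  · match u, w, hu, hw, huw with
    | .inl u, .inl w, hu, hw, huw =>
      exact ⟨u.1, w.1, fun h => huw (congrArg Sum.inl (Subtype.ext h)), hu, hw⟩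

lemma inr_hybrid (hbne : b ≠ r')
    (h : (sDAG N v N' r').IsHybrid (.inr b)) : N'.IsHybrid b := by
  obtain ⟨u, w, huw, hu, hw⟩ := h
  match u, w, hu, hw, huw with
  | .inl u, _, hu, _, _ => exact absurd hu.2 hbne
  | .inr u, .inl w, _, hw, _ => exact absurd hw.2 hbne
  | .inr u, .inr w, hu, hw, huw =>
    exact ⟨u, w, fun h => huw (congrArg Sum.inr h), hu, hw⟩

lemma sLevel [Finite V] [Finite V'] (hr'1 : ∀ u, ¬ N'.E u r')
    (hL : N.IsLevel 1) (hL' : N'.IsLevel 1) : (sDAG N v N' r').IsLevel 1 := by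
  intro B hB
  by_cases hcase : ∃ b, b ≠ r' ∧ Sum.inr b ∈ B
  · -- block inside the `N'` side
    obtain ⟨b0, hb0, hb0B⟩ := hcase
    have hBr : ∀ x ∈ B, ∃ c, x = Sum.inr c := by
      rintro (a | c) hx
      · exact absurd hx (fun hx => no_cross hB.1 hx hb0 hb0B)
      · exact ⟨c, rfl⟩
    set S : Set V' := Sum.inr ⁻¹' B with hSdef
    have hBS : Sum.inr '' S = B := Set.image_preimage_eq_of_subset
      (by rintro x hx; obtain ⟨c, rfl⟩ := hBr x hx; exact ⟨c, rfl⟩)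
    have hbic : N'.BiconnOn S :=
      (biconnOn_image N' (sDAG N v N' r') Sum.inr Sum.inr_injective
        (fun _ _ => Iff.rfl) S).2 (hBS ▸ hB.1)
    obtain ⟨D, hD, hSD⟩ := exists_block_superset N' hbic
    have hsub : {z | z ∈ B ∧ (sDAG N v N' r').IsHybrid z ∧ ¬ (sDAG N v N' r').MaxIn B z}
        ⊆ Sum.inr '' {w | w ∈ D ∧ N'.IsHybrid w ∧ ¬ N'.MaxIn D w} := by
      rintro z ⟨hzB, hzH, hzM⟩
      obtain ⟨c, rfl⟩ := hBr z hzB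
      have hcS : c ∈ S := hzB
      have hcne : c ≠ r' := by
        rintro rfl
        apply hzM
        refine ⟨hzB, ?_⟩
        intro u hu hbel
        obtain ⟨d, rfl⟩ := hBr u hu
        exact congrArg Sum.inr (rtg_start hr'1 (below_inr_inr.1 hbel))
      refine ⟨c, ⟨hSD hcS, inr_hybrid hcne hzH, ?_⟩, rfl⟩
      intro hM
      apply hzM
      refine ⟨hzB, ?_⟩
      intro u hu hbel
      obtain ⟨d, rfl⟩ := hBr u hu
      exact congrArg Sum.inr (hM.2 d (hSD hu) (below_inr_inr.1 hbel))
    refine le_trans (Set.ncard_le_ncard hsub (Set.toFinite _)) ?_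
    rw [Set.ncard_image_of_injective _ Sum.inr_injective]
    exact hL' D hD
  · -- block inside the `N` side (with `inr r'` playing the role of `leaf v`)
    have hBr : ∀ x ∈ B, ∃ a, x = psi N v r' a := by
      rintro (a | c) hx
      · exact ⟨a.1, by simp only [psi, dif_neg a.2]⟩
      · have hc : c = r' := by_contra fun h => hcase ⟨c, h, hx⟩
        refine ⟨N.leaf v, ?_⟩
        unfold psi
        rw [dif_pos rfl, hc]
    set S : Set V := psi N v r' ⁻¹' B with hSdef
    have hBS : psi N v r' '' S = B := Set.image_preimage_eq_of_subset
      (by rintro x hx; obtain ⟨c, rfl⟩ := hBr x hx; exact ⟨c, rfl⟩)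
    have hbic : N.BiconnOn S :=
      (biconnOn_image N (sDAG N v N' r') (psi N v r') psi_inj psi_E S).2 (hBS ▸ hB.1)
    obtain ⟨D, hD, hSD⟩ := exists_block_superset N hbic
    have hsub : {z | z ∈ B ∧ (sDAG N v N' r').IsHybrid z ∧ ¬ (sDAG N v N' r').MaxIn B z}
        ⊆ psi N v r' '' {w | w ∈ D ∧ N.IsHybrid w ∧ ¬ N.MaxIn D w} := by
      rintro z ⟨hzB, hzH, hzM⟩
      obtain ⟨c, rfl⟩ := hBr z hzB
      have hcS : c ∈ S := hzB
      refine ⟨c, ⟨hSD hcS, psi_hybrid hr'1 hzH, ?_⟩, rfl⟩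
      intro hM
      apply hzM
      refine ⟨hzB, ?_⟩
      intro u hu hbel
      obtain ⟨d, rfl⟩ := hBr u hu
      exact congrArg (psi N v r') (hM.2 d (hSD hu) (psi_below hbel))
    refine le_trans (Set.ncard_le_ncard hsub (Set.toFinite _)) ?_
    rw [Set.ncard_image_of_injective _ psi_inj]
    exact hL D hD

end Level

section Expl

variable {H : SimpleGraph α} {H' : SimpleGraph β}

lemma subst_adj_inl_inl {x y : {u : α // u ≠ v}} :
    (substGraph H v H').Adj (.inl x) (.inl y) ↔ x ≠ y ∧ H.Adj x.1 y.1 := by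
  rw [substGraph, SimpleGraph.fromRel_adj]
  constructor
  · rintro ⟨hne, h | h⟩ <;>
      rcases h with ⟨a, b, ha, hb, hadj⟩ | ⟨a, b, ha, hb, hadj⟩ | ⟨a, b, ha, hb, hadj⟩
    · obtain rfl := Sum.inl.inj ha; obtain rfl := Sum.inl.inj hb
      exact ⟨fun h => hne (congrArg Sum.inl h), hadj⟩
    · exact absurd ha (by simp)
    · exact absurd hb (by simp)
    · obtain rfl := Sum.inl.inj ha; obtain rfl := Sum.inl.inj hb
      exact ⟨fun h => hne (congrArg Sum.inl h), hadj.symm⟩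
    · exact absurd ha (by simp)
    · exact absurd hb (by simp)
  · rintro ⟨hne, hadj⟩
    exact ⟨fun h => hne (Sum.inl.inj h), Or.inl (Or.inl ⟨x, y, rfl, rfl, hadj⟩)⟩

lemma subst_adj_inr_inr {x y : β} :
    (substGraph H v H').Adj (.inr x) (.inr y) ↔ x ≠ y ∧ H'.Adj x y := by
  rw [substGraph, SimpleGraph.fromRel_adj]
  constructor
  · rintro ⟨hne, h | h⟩ <;>
      rcases h with ⟨a, b, ha, hb, hadj⟩ | ⟨a, b, ha, hb, hadj⟩ | ⟨a, b, ha, hb, hadj⟩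
    · exact absurd ha (by simp)
    · obtain rfl := Sum.inr.inj ha; obtain rfl := Sum.inr.inj hb
      exact ⟨fun h => hne (congrArg Sum.inr h), hadj⟩
    · exact absurd ha (by simp)
    · exact absurd ha (by simp)
    · obtain rfl := Sum.inr.inj ha; obtain rfl := Sum.inr.inj hb
      exact ⟨fun h => hne (congrArg Sum.inr h), hadj.symm⟩
    · exact absurd ha (by simp)
  · rintro ⟨hne, hadj⟩
    exact ⟨fun h => hne (Sum.inr.inj h), Or.inl (Or.inr (Or.inl ⟨x, y, rfl, rfl, hadj⟩))⟩

lemma subst_adj_inl_inr {x : {u : α // u ≠ v}} {y : β} :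
    (substGraph H v H').Adj (.inl x) (.inr y) ↔ H.Adj x.1 v := by
  rw [substGraph, SimpleGraph.fromRel_adj]
  constructor
  · rintro ⟨hne, h | h⟩ <;>
      rcases h with ⟨a, b, ha, hb, hadj⟩ | ⟨a, b, ha, hb, hadj⟩ | ⟨a, b, ha, hb, hadj⟩
    · exact absurd hb (by simp)
    · exact absurd ha (by simp)
    · obtain rfl := Sum.inl.inj ha
      exact hadj
    · exact absurd ha (by simp)
    · exact absurd hb (by simp)
    · exact absurd hb (by simp)
  · intro hadj
    exact ⟨by simp, Or.inl (Or.inr (Or.inr ⟨x, y, rfl, rfl, hadj⟩))⟩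

end Expl

section Main

variable [Finite V'] (hr'1 : ∀ u, ¬ N'.E u r') (hr'2 : ∀ w, (∀ u, ¬ N'.E u w) → w = r')

omit [Finite V'] hr'1 hr'2 in
lemma lca_ne_leafv {x s : α} (hx : x ≠ v) {a : V} (h : N.IsLCA a {x, s}) :
    a ≠ N.leaf v :=
  commAnc_ne_leafv hx (h.1 x (Set.mem_insert _ _))

include hr'2 in
lemma key_mixed (h2 : N.Has2LCA) (x : {u : α // u ≠ v}) (y : β) :
    ∃! z, (sDAG N v N' r').IsLCA z {.inl x, .inr y} := by
  obtain ⟨a, ha, hau⟩ := h2 x.1 v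
  have hne : a ≠ N.leaf v := lca_ne_leafv x.2 ha
  refine ⟨.inl ⟨a, hne⟩, (lcaIII hr'2).2 ⟨a, hne, rfl, ha⟩, ?_⟩
  intro z hz
  obtain ⟨b, hb, rfl, hb2⟩ := (lcaIII hr'2).1 hz
  exact congrArg Sum.inl (Subtype.ext (hau b hb2))

include hr'2 in
lemma sHas2LCA (h2 : N.Has2LCA) (h2' : N'.Has2LCA) : (sDAG N v N' r').Has2LCA := by
  rintro (x | x) (y | y)
  · obtain ⟨a, ha, hau⟩ := h2 x.1 y.1
    have hne : a ≠ N.leaf v := lca_ne_leafv x.2 ha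
    refine ⟨.inl ⟨a, hne⟩, lcaI.2 ⟨⟨a, hne⟩, rfl, ha⟩, ?_⟩
    intro z hz
    obtain ⟨b, rfl, hb⟩ := lcaI.1 hz
    exact congrArg Sum.inl (Subtype.ext (hau b.1 hb))
  · exact key_mixed hr'2 h2 x y
  · have hpc : ({Sum.inr x, Sum.inl y} :
        Set ({u : α // u ≠ v} ⊕ β)) = {Sum.inl y, Sum.inr x} := Set.pair_comm _ _
    simp only [hpc]
    exact key_mixed hr'2 h2 y x
  · obtain ⟨c, hc, hcu⟩ := h2' x y
    refine ⟨.inr c, (lcaII hr'2).2 ⟨c, rfl, hc⟩, ?_⟩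
    intro z hz
    obtain ⟨d, rfl, hd⟩ := (lcaII hr'2).1 hz
    exact congrArg Sum.inr (hcu d hd)

include hr'2 in
lemma sExplains {t : V → Bool} {t' : V' → Bool}
    (hE : N.Explains t H) (hE' : N'.Explains t' H') :
    (sDAG N v N' r').Explains (Sum.elim (fun a => t a.1) t') (substGraph H v H') := by
  refine ⟨sHas2LCA hr'2 hE.1 hE'.1, ?_⟩
  rintro (x | x) (y | y) hne
  · have hxy : x ≠ y := fun h => hne (congrArg Sum.inl h)
    rw [subst_adj_inl_inl]
    rw [hE.2 x.1 y.1 (fun h => hxy (Subtype.ext h))]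
    constructor
    · rintro ⟨-, a, ha, hta⟩
      have hnev : a ≠ N.leaf v := lca_ne_leafv x.2 ha
      exact ⟨.inl ⟨a, hnev⟩, lcaI.2 ⟨⟨a, hnev⟩, rfl, ha⟩, hta⟩
    · rintro ⟨z, hz, htz⟩
      obtain ⟨b, rfl, hb⟩ := lcaI.1 hz
      exact ⟨hxy, b.1, hb, htz⟩
  · rw [subst_adj_inl_inr, hE.2 x.1 v x.2]
    constructor
    · rintro ⟨a, ha, hta⟩
      have hnev : a ≠ N.leaf v := lca_ne_leafv x.2 ha
      exact ⟨.inl ⟨a, hnev⟩, (lcaIII hr'2).2 ⟨a, hnev, rfl, ha⟩, hta⟩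
    · rintro ⟨z, hz, htz⟩
      obtain ⟨b, hb, rfl, hb2⟩ := (lcaIII hr'2).1 hz
      exact ⟨b, hb2, htz⟩
  · have hpc : ({Sum.inr x, Sum.inl y} :
        Set ({u : α // u ≠ v} ⊕ β)) = {Sum.inl y, Sum.inr x} := Set.pair_comm _ _
    rw [SimpleGraph.adj_comm, subst_adj_inl_inr, hE.2 y.1 v y.2]
    simp only [hpc]
    constructor
    · rintro ⟨a, ha, hta⟩
      have hnev : a ≠ N.leaf v := lca_ne_leafv y.2 ha
      exact ⟨.inl ⟨a, hnev⟩, (lcaIII hr'2).2 ⟨a, hnev, rfl, ha⟩, hta⟩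
    · rintro ⟨z, hz, htz⟩
      obtain ⟨b, hb, rfl, hb2⟩ := (lcaIII hr'2).1 hz
      exact ⟨b, hb2, htz⟩
  · have hxy : x ≠ y := fun h => hne (congrArg Sum.inr h)
    rw [subst_adj_inr_inr, hE'.2 x y hxy]
    constructor
    · rintro ⟨-, c, hc, htc⟩
      exact ⟨.inr c, (lcaII hr'2).2 ⟨c, rfl, hc⟩, htc⟩
    · rintro ⟨z, hz, htz⟩
      obtain ⟨d, rfl, hd⟩ := (lcaII hr'2).1 hz
      exact ⟨hxy, d, hd, htz⟩

end Main
end Subst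

theorem stmt19 {α β : Type} [Finite α] [Finite β]
    (H : SimpleGraph α) (H' : SimpleGraph β) (v : α)
    (h : Level1Explainable H) (h' : Level1Explainable H') :
    Level1Explainable (substGraph H v H') := by
  obtain ⟨V, hVfin, N, t, hNet, hLev, hExp⟩ := h
  obtain ⟨V', hV'fin, N', t', hNet', hLev', hExp'⟩ := h'
  obtain ⟨r', hr'1, hr'u⟩ := hNet'
  have hr'2 : ∀ w, (∀ u, ¬ N'.E u w) → w = r' := fun w hw => hr'u w hw
  exact ⟨{w : V // w ≠ N.leaf v} ⊕ V', inferInstance, Subst.sDAG N v N' r',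
    Sum.elim (fun a => t a.1) t', Subst.sNetwork hr'1 hr'2 hNet,
    Subst.sLevel hr'1 hLev hLev', Subst.sExplains hr'2 hExp hExp'⟩
end
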